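/- arXiv:2202.09471 — 10 statements merged into one kernel-verified Lean document; each statement's English description precedes it below -/
import Mathlib

section
/- Let Γ be a finite group acting by automorphisms on finite groups H̃ and H with gcd(|H̃|, |Γ|) = 1, and let φ : H̃ → H be a Γ-equivariant surjective group homomorphism. Let π : H̃ ⋊ Γ → H ⋊ Γ be the induced surjection (given by φ on the first factor and the identity on Γ), and assume π is a stem extension, i.e., ker π is contained both in the center of H̃ ⋊ Γ and in the commutator subgroup of H̃ ⋊ Γ. Suppose x, y ∈ H ⋊ Γ satisfy x·y = y·x and the order of x equals the order of the image of x under the canonical projection H ⋊ Γ → Γ. Then for all preimages x̃ ∈ π⁻¹(x) and ỹ ∈ π⁻¹(y) one has x̃·ỹ = ỹ·x̃. -/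
/-- Let `Γ` be a finite group acting by automorphisms on finite groups
`H̃` and `H` with `gcd(|H̃|, |Γ|) = 1`, and let `φ : H̃ → H` be a `Γ`-equivariant
surjective group homomorphism.  Let `π : H̃ ⋊ Γ → H ⋊ Γ` be the induced surjection
(given by `φ` on the first factor and the identity on `Γ`), and assume `π` is a stem
extension, i.e. `ker π` is contained both in the center and in the commutator subgroup
of `H̃ ⋊ Γ`.  Suppose `x, y ∈ H ⋊ Γ` commute and the order of `x` equals the order of
the image of `x` under the canonical projection `H ⋊ Γ → Γ`.  Then all preimages
`x̃ ∈ π⁻¹(x)` and `ỹ ∈ π⁻¹(y)` commute. -/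
theorem stmt1 {Γ Ht H : Type*} [Group Γ] [Fintype Γ] [Group Ht] [Fintype Ht]
    [Group H] [Fintype H]
    (a : Γ →* MulAut Ht) (b : Γ →* MulAut H)
    (hcop : Nat.Coprime (Fintype.card Ht) (Fintype.card Γ))
    (φ : Ht →* H) (hφsurj : Function.Surjective φ)
    (hequiv : ∀ (γ : Γ) (t : Ht), φ (a γ t) = b γ (φ t))
    (π : Ht ⋊[a] Γ →* H ⋊[b] Γ)
    (hπ : ∀ (t : Ht) (γ : Γ), π (⟨t, γ⟩ : Ht ⋊[a] Γ) = (⟨φ t, γ⟩ : H ⋊[b] Γ))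
    (hker_center : π.ker ≤ Subgroup.center (Ht ⋊[a] Γ))
    (hker_comm : π.ker ≤ commutator (Ht ⋊[a] Γ))
    (x y : H ⋊[b] Γ)
    (hxy : x * y = y * x)
    (hord : orderOf x = orderOf (SemidirectProduct.rightHom x))
    (x' y' : Ht ⋊[a] Γ) (hx' : π x' = x) (hy' : π y' = y) :
    x' * y' = y' * x' := by
  -- order of any kernel element divides |Ht|
  have hker_ord : ∀ z : Ht ⋊[a] Γ, z ∈ π.ker → orderOf z ∣ Fintype.card Ht := by
    intro z hz
    obtain ⟨t, γ⟩ := z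
    have hz' : π ⟨t, γ⟩ = 1 := hz
    rw [hπ] at hz'
    have hγ : γ = 1 := congrArg SemidirectProduct.right hz'
    subst hγ
    have : (⟨t, 1⟩ : Ht ⋊[a] Γ) = SemidirectProduct.inl t := rfl
    rw [this, orderOf_injective SemidirectProduct.inl SemidirectProduct.inl_injective]
    exact orderOf_dvd_card
  set c : Ht ⋊[a] Γ := x' * y' * x'⁻¹ * y'⁻¹ with hc
  have hπc : c ∈ π.ker := by
    have : π c = 1 := by
      simp only [hc, map_mul, map_inv, hx', hy', hxy]
      group
    exact this
  have hcen : ∀ g : Ht ⋊[a] Γ, g * c = c * g :=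
    Subgroup.mem_center_iff.mp (hker_center hπc)
  have hswap : x' * y' = y' * x' * c := by
    rw [hcen (y' * x'), hc]
    group
  have key : ∀ k : ℕ, x' ^ k * y' = y' * x' ^ k * c ^ k := by
    intro k
    induction k with
    | zero => simp
    | succ k ih =>
      have hcx : c * x' = x' * c := (hcen x').symm
      calc x' ^ (k + 1) * y' = x' ^ k * (x' * y') := by rw [pow_succ']; group
        _ = x' ^ k * y' * (x' * c) := by rw [hswap]; group
        _ = y' * x' ^ k * c ^ k * (x' * c) := by rw [ih]
        _ = y' * x' ^ k * (c ^ k * x') * c := by group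
        _ = y' * x' ^ k * (x' * c ^ k) * c := by
              have hck : c ^ k * x' = x' * c ^ k := Commute.pow_left hcx k
              rw [hck]
        _ = y' * x' ^ (k + 1) * c ^ (k + 1) := by rw [pow_succ, pow_succ]; group
  set n : ℕ := orderOf x with hn
  have hxn : x' ^ n ∈ π.ker := by
    rw [MonoidHom.mem_ker, map_pow, hx', hn, pow_orderOf_eq_one]
  have hxncen : y' * x' ^ n = x' ^ n * y' :=
    Subgroup.mem_center_iff.mp (hker_center hxn) y'
  have hcn : c ^ n = 1 := by
    have h := key n
    rw [hxncen] at h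
    exact mul_eq_left.mp h.symm
  have hdvd1 : orderOf c ∣ Fintype.card Ht := hker_ord c hπc
  have hdvd2 : orderOf c ∣ Fintype.card Γ := by
    have h1 : orderOf c ∣ n := orderOf_dvd_of_pow_eq_one hcn
    have h2 : n ∣ Fintype.card Γ := by
      rw [hord]; exact orderOf_dvd_card
    exact h1.trans h2
  have : orderOf c = 1 := Nat.eq_one_of_dvd_coprimes hcop hdvd1 hdvd2
  have hc1 : c = 1 := orderOf_eq_one_iff.mp this
  rw [hswap, hc1, mul_one]
end

section
/- Let ℓ be a prime and G a finite ℓ-group. Let σ₁ and σ₂ be automorphisms of G having the same order, and assume this order is coprime to ℓ. Let π : G → H be a surjective group homomorphism with ker π contained in the commutator subgroup of G, and assume that σ₁ and σ₂ each map ker π onto ker π and that they induce the same automorphism of H, i.e., π(σ₁(x)) = π(σ₂(x)) for all x ∈ G. Then there exists an automorphism τ of G such that σ₁ = τ⁻¹ ∘ σ₂ ∘ τ, τ maps ker π onto ker π, and τ induces the identity on H, i.e., π(τ(x)) = π(x) for all x ∈ G. -/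
open Finset in
lemma h1_vanish {C : Type*} [CommGroup C] [Finite C] {n : ℕ}
    (hcard : n.Coprime (Nat.card C)) (f : C →* C) (a : C)
    (hfa : f^[n] a = a)
    (hprod : ∏ k ∈ Finset.range n, f^[k] a = 1) :
    ∃ τ : C, τ * (f τ)⁻¹ = a := by
  rcases eq_or_lt_of_le (Nat.one_le_iff_ne_zero.2 (Nat.pos_iff_ne_zero.mp (Nat.card_pos (α := C)))) with h1 | h1
  · -- card C = 1 : C trivial
    have : Subsingleton C := (Nat.card_eq_one_iff_unique.mp h1.symm).1
    exact ⟨1, Subsingleton.elim _ _⟩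
  obtain ⟨m, -, hm⟩ := Nat.exists_mul_mod_eq_one_of_coprime hcard h1
  set z : C := ∏ k ∈ Finset.range n, (f^[k] a) ^ (k + 1) with hz
  have hfz : f z = z * a ^ n := by
    have h0 : f z = ∏ k ∈ Finset.range n, (f^[k + 1] a) ^ (k + 1) := by
      rw [hz, map_prod]
      exact Finset.prod_congr rfl fun k _ => by
        rw [map_pow, ← Function.iterate_succ_apply' f k a]
    have h1' : ∀ k, (f^[k + 1] a) ^ (k + 1) =
        (f^[k + 1] a) ^ (k + 2) * (f^[k + 1] a)⁻¹ := by
      intro k; rw [pow_succ]; group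
    rw [h0]
    calc ∏ k ∈ Finset.range n, (f^[k + 1] a) ^ (k + 1)
        = (∏ k ∈ Finset.range n, (f^[k + 1] a) ^ (k + 2)) *
          (∏ k ∈ Finset.range n, f^[k + 1] a)⁻¹ := by
          rw [← Finset.prod_inv_distrib, ← Finset.prod_mul_distrib]
          exact Finset.prod_congr rfl fun k _ => h1' k
      _ = (∏ k ∈ Finset.range n, (f^[k + 1] a) ^ (k + 2)) := by
          have : ∏ k ∈ Finset.range n, f^[k + 1] a
              = f (∏ k ∈ Finset.range n, f^[k] a) := by
            rw [map_prod]
            exact Finset.prod_congr rfl fun k _ =>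
              Function.iterate_succ_apply' f k a
          rw [this, hprod, map_one, inv_one, mul_one]
      _ = (∏ k ∈ Finset.range (n + 1), (f^[k] a) ^ (k + 1)) * a⁻¹ := by
          rw [Finset.prod_range_succ' (fun k => (f^[k] a) ^ (k + 1)) n]
          simp
      _ = z * a ^ (n + 1) * a⁻¹ := by
          rw [Finset.prod_range_succ, hfa, hz]
      _ = z * a ^ n := by rw [pow_succ]; group
  refine ⟨(z⁻¹) ^ m, ?_⟩
  have : (z⁻¹) ^ m * (f ((z⁻¹) ^ m))⁻¹ = (z⁻¹ * f z)^ m := by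
    rw [map_pow, map_inv]
    rw [mul_pow]
    group
  rw [this, hfz]
  have : z⁻¹ * (z * a ^ n) = a ^ n := by group
  rw [this, ← pow_mul]
  have horder : orderOf a ∣ Nat.card C := orderOf_dvd_natCard a
  have hmod : n * m ≡ 1 [MOD Nat.card C] := by
    unfold Nat.ModEq
    rw [Nat.mod_eq_of_lt h1]
    exact hm
  have : a ^ (n * m) = a ^ 1 := by
    rw [pow_eq_pow_iff_modEq]
    exact hmod.of_dvd horder
  rw [this, pow_one]

lemma abelian_conj {p : ℕ} (hp : p.Prime) {Q : Type*} [Group Q]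
    (Z : Subgroup Q) [Z.Normal] [Finite Z] (hZp : IsPGroup p Z)
    (hcomm : ∀ a ∈ Z, ∀ b ∈ Z, a * b = b * a)
    {n : ℕ} (hn : 0 < n) (hnp : n.Coprime p)
    (s t : Q) (ha : s⁻¹ * t ∈ Z) (hs : s ^ n = 1) (ht : t ^ n = 1) :
    ∃ τ ∈ Z, τ⁻¹ * s * τ = t := by
  letI : CommGroup Z :=
    { (inferInstance : Group Z) with
      mul_comm := fun a b => Subtype.ext (hcomm a a.2 b b.2) }
  -- the conjugation monoid hom on Z
  have hconjmem : ∀ x ∈ Z, s⁻¹ * x * s ∈ Z := by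
    intro x hx
    have := Subgroup.Normal.conj_mem ‹Z.Normal› x hx s⁻¹
    simpa using this
  set f : Z →* Z :=
    { toFun := fun x => ⟨s⁻¹ * (x : Q) * s, hconjmem x x.2⟩
      map_one' := by ext; simp
      map_mul' := fun x y => by ext; simp [mul_assoc] } with hf
  set a : Z := ⟨s⁻¹ * t, ha⟩ with hadef
  -- iterates of f are conjugation by powers of s
  have hiter : ∀ (k : ℕ) (x : Z), ((f^[k] x : Z) : Q) = (s ^ k)⁻¹ * (x : Q) * s ^ k := by
    intro k
    induction k with
    | zero => intro x; simp
    | succ k ih =>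
      intro x
      rw [Function.iterate_succ_apply' f k x]
      show s⁻¹ * ((f^[k] x : Z) : Q) * s = _
      rw [ih x, pow_succ]
      group
  have hfa : f^[n] a = a := by
    ext
    rw [hiter n a, hs]
    group
  -- product of the iterates is 1, from t ^ n = 1
  have hpows : ∀ k : ℕ, t ^ k = s ^ k * ((∏ i ∈ Finset.range k, f^[i] a : Z) : Q) := by
    intro k
    induction k with
    | zero => simp
    | succ k ih =>
      have h1 : t ^ (k + 1) = t * t ^ k := by rw [pow_succ']
      rw [h1, ih]
      have ht' : t = s * (a : Q) := by rw [hadef]; group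
      rw [Finset.prod_range_succ, mul_comm (∏ i ∈ Finset.range k, f^[i] a) (f^[k] a)]
      push_cast
      rw [hiter k a, ht', pow_succ']
      group
  have hprod : ∏ i ∈ Finset.range n, f^[i] a = 1 := by
    have := hpows n
    rw [hs, ht, one_mul] at this
    exact Subtype.ext this.symm
  -- coprimality with the card of Z
  haveI : Fact p.Prime := ⟨hp⟩
  obtain ⟨e, he⟩ := IsPGroup.iff_card.mp hZp
  have hcard : n.Coprime (Nat.card Z) := by rw [he]; exact hnp.pow_right e
  obtain ⟨τ', hτ'⟩ := h1_vanish hcard f a hfa hprod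
  refine ⟨(τ' : Q), τ'.2, ?_⟩
  -- τ'⁻¹ * s * τ' = t
  have h2 : ((τ' * (f τ')⁻¹ : Z) : Q) = s⁻¹ * t := by rw [hτ']
  have h3 : ((f τ' : Z) : Q) = s⁻¹ * (τ' : Q) * s := rfl
  have h4 : ((τ' * (f τ')⁻¹ : Z) : Q) = (τ' : Q) * (s⁻¹ * (τ' : Q) * s)⁻¹ := by
    push_cast [h3]; rfl
  -- elements of Z commute, so (f τ')⁻¹ * τ' = τ' * (f τ')⁻¹
  have h5 : (τ' : Q) * (s⁻¹ * (τ' : Q) * s)⁻¹ = (s⁻¹ * (τ' : Q) * s)⁻¹ * (τ' : Q) := by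
    apply hcomm
    · exact τ'.2
    · exact Subgroup.inv_mem Z (hconjmem _ τ'.2)
  rw [h4, h5] at h2
  -- now conclude
  have : s * ((s⁻¹ * (τ' : Q) * s)⁻¹ * (τ' : Q)) = s * (s⁻¹ * t) := by rw [h2]
  calc (τ' : Q)⁻¹ * s * (τ' : Q)
      = s * ((s⁻¹ * (τ' : Q) * s)⁻¹ * (τ' : Q)) := by group
    _ = s * (s⁻¹ * t) := this
    _ = t := by group

lemma pgroup_conj {p : ℕ} (hp : p.Prime) :
    ∀ (N : ℕ) {Q : Type u_1} [Group Q] (A : Subgroup Q) [A.Normal] [Finite A],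
    Nat.card A ≤ N → IsPGroup p A →
    ∀ {n : ℕ}, 0 < n → n.Coprime p →
    ∀ s t : Q, s⁻¹ * t ∈ A → s ^ n = 1 → t ^ n = 1 →
    ∃ τ ∈ A, τ⁻¹ * s * τ = t := by
  intro N
  induction N with
  | zero =>
    intro Q _ A _ _ hcard _ _ _ _ _ _ _ _ _
    exact absurd (Nat.card_pos (α := A)) (by omega)
  | succ N ih =>
    intro Q _ A _ _ hcard hA n hn hnp s t hst hs ht
    rcases eq_or_ne A ⊥ with hbot | hbot
    · -- trivial case : s = t
      refine ⟨1, one_mem A, ?_⟩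
      have : s⁻¹ * t = 1 := by
        rw [hbot] at hst; exact Subgroup.mem_bot.mp hst
      have : t = s := by
        have := congrArg (s * ·) this
        simpa [mul_assoc] using this
      simp [this]
    · -- A nontrivial, take Z := A ⊓ centralizer A
      haveI : Nontrivial A := A.bot_or_nontrivial.resolve_left hbot
      set Z : Subgroup Q := A ⊓ Subgroup.centralizer (A : Set Q) with hZdef
      have hZA : Z ≤ A := inf_le_left
      have hZmem : ∀ x, x ∈ Z ↔ x ∈ A ∧ ∀ a ∈ A, a * x = x * a := by
        intro x
        rw [hZdef, Subgroup.mem_inf, Subgroup.mem_centralizer_iff]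
        rfl
      haveI hZnormal : Z.Normal := by
        constructor
        intro z hz q
        rw [hZmem] at hz ⊢
        obtain ⟨hzA, hzc⟩ := hz
        constructor
        · exact Subgroup.Normal.conj_mem ‹A.Normal› z hzA q
        · intro a haA
          have h1 : q⁻¹ * a * q ∈ A := by
            have := Subgroup.Normal.conj_mem ‹A.Normal› a haA q⁻¹
            simpa using this
          have := hzc _ h1
          calc a * (q * z * q⁻¹) = q * ((q⁻¹ * a * q) * z) * q⁻¹ := by group
            _ = q * (z * (q⁻¹ * a * q)) * q⁻¹ := by rw [this]
            _ = q * z * q⁻¹ * a := by group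
      haveI : Finite Z := Finite.of_injective (Subgroup.inclusion hZA)
        (Subgroup.inclusion_injective hZA)
      have hZp : IsPGroup p Z := hA.to_le hZA
      have hZcomm : ∀ a ∈ Z, ∀ b ∈ Z, a * b = b * a := by
        intro a haZ b hbZ
        exact ((hZmem b).mp hbZ).2 a ((hZmem a).mp haZ).1
      -- a nontrivial element of Z, coming from the center of A
      haveI : Fact p.Prime := ⟨hp⟩
      haveI := hA.center_nontrivial
      obtain ⟨c, hc1⟩ := exists_ne (1 : Subgroup.center A)
      have hcZ : ((c : A) : Q) ∈ Z := by
        rw [hZmem]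
        refine ⟨(c : A).2, ?_⟩
        intro a haA
        have := (Subgroup.mem_center_iff.mp c.2) ⟨a, haA⟩
        exact congrArg Subtype.val this
      have hcne : ((c : A) : Q) ≠ 1 := by
        intro h
        apply hc1
        ext
        exact h
      -- pass to the quotient Q ⧸ Z
      set Abar : Subgroup (Q ⧸ Z) := A.map (QuotientGroup.mk' Z) with hAbar
      haveI : Abar.Normal :=
        Subgroup.Normal.map ‹A.Normal› (QuotientGroup.mk' Z) (QuotientGroup.mk'_surjective Z)
      haveI : Finite Abar := by
        rw [hAbar]
        have h1 : ((A.map (QuotientGroup.mk' Z) : Subgroup (Q ⧸ Z)) : Set (Q ⧸ Z))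
            = (QuotientGroup.mk' Z) '' (A : Set Q) := Subgroup.coe_map _ _
        exact Set.Finite.to_subtype (h1 ▸ (Set.toFinite (A : Set Q)).image _)
      have hAbarp : IsPGroup p Abar := hA.map _
      -- the cardinality drops
      have hcardlt : Nat.card Abar < Nat.card A := by
        set f : A →* Q ⧸ Z := (QuotientGroup.mk' Z).comp A.subtype with hfdef
        have hrange : f.range = Abar := by
          rw [hfdef, MonoidHom.range_comp, Subgroup.range_subtype, hAbar]
        have hcardeq : Nat.card A = Nat.card (A ⧸ f.ker) * Nat.card f.ker :=
          Subgroup.card_eq_card_quotient_mul_card_subgroup f.ker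
        have hcardrange : Nat.card Abar = Nat.card (A ⧸ f.ker) := by
          rw [← hrange]
          exact (Nat.card_congr (QuotientGroup.quotientKerEquivRange f).toEquiv).symm
        haveI : Nontrivial f.ker := by
          refine ⟨⟨⟨⟨_, (c : A).2⟩, ?_⟩, 1, ?_⟩⟩
          · show f ⟨_, (c : A).2⟩ = 1
            rw [hfdef]
            simp only [MonoidHom.comp_apply, Subgroup.coe_subtype]
            exact (QuotientGroup.eq_one_iff _).mpr hcZ
          · intro h
            apply hcne
            have h' := congrArg (fun x : f.ker => ((x : A) : Q)) h
            simpa using h'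
        have h2 : 2 ≤ Nat.card f.ker := Finite.one_lt_card_iff_nontrivial.mpr ‹Nontrivial f.ker›
        have hq : 0 < Nat.card (A ⧸ f.ker) := Nat.card_pos
        calc Nat.card Abar = Nat.card (A ⧸ f.ker) := hcardrange
          _ < Nat.card (A ⧸ f.ker) * 2 := by omega
          _ ≤ Nat.card (A ⧸ f.ker) * Nat.card f.ker := Nat.mul_le_mul_left _ h2
          _ = Nat.card A := hcardeq.symm
      -- apply the induction hypothesis in the quotient
      obtain ⟨τbar, hτbarA, hτbar⟩ := ih Abar (by omega) hAbarp hn hnp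
        ((QuotientGroup.mk' Z) s) ((QuotientGroup.mk' Z) t)
        (by rw [← map_inv, ← map_mul]; exact Subgroup.mem_map_of_mem _ hst)
        (by rw [← map_pow, hs, map_one]) (by rw [← map_pow, ht, map_one])
      obtain ⟨τ₀, hτ₀A, hτ₀⟩ := Subgroup.mem_map.mp hτbarA
      -- the conjugate s' of s by τ₀ agrees with t mod Z
      set s' : Q := τ₀⁻¹ * s * τ₀ with hs'def
      have hs'Z : s'⁻¹ * t ∈ Z := by
        have : (QuotientGroup.mk' Z) s' = (QuotientGroup.mk' Z) t := by
          rw [hs'def, map_mul, map_mul, map_inv, hτ₀, hτbar]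
        exact (QuotientGroup.eq ).mp (by exact this)
      have hs'n : s' ^ n = 1 := by
        rw [hs'def]
        have : (τ₀⁻¹ * s * τ₀) ^ n = τ₀⁻¹ * s ^ n * τ₀ := by
          rw [show τ₀⁻¹ * s * τ₀ = τ₀⁻¹ * s * τ₀⁻¹⁻¹ by group, conj_pow]
          group
        rw [this, hs]
        group
      obtain ⟨τ₁, hτ₁Z, hτ₁⟩ := abelian_conj hp Z hZp hZcomm hn hnp s' t hs'Z hs'n ht
      refine ⟨τ₀ * τ₁, mul_mem hτ₀A (hZA hτ₁Z), ?_⟩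
      rw [← hτ₁, hs'def]
      group

lemma key_triv {ℓ : ℕ} (hℓ : ℓ.Prime) :
    ∀ (N : ℕ) {G : Type u_1} [Group G] [Finite G], Nat.card G ≤ N →
    IsPGroup ℓ G → ∀ β : MulAut G, (orderOf β).Coprime ℓ →
    (∀ x : G, x⁻¹ * β x ∈ commutator G) → β = 1 := by
  intro N
  induction N with
  | zero =>
    intro G _ _ hcard
    exact absurd (Nat.card_pos (α := G)) (by omega)
  | succ N ih =>
    intro G _ _ hcard hG β hcop hcomm
    rcases subsingleton_or_nontrivial G with hsub | hnt
    · ext x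
      exact Subsingleton.elim _ _
    · haveI : Fact ℓ.Prime := ⟨hℓ⟩
      set Z : Subgroup G := Subgroup.center G with hZ
      haveI : Nontrivial Z := hG.center_nontrivial
      have hmapZ : Z.map β.toMonoidHom = Z :=
        Subgroup.characteristic_iff_map_eq.mp inferInstance β
      set β' : MulAut (G ⧸ Z) := QuotientGroup.congr Z Z (β : G ≃* G) hmapZ with hβ'
      have hcompat : ∀ x : G, β' (x : G ⧸ Z) = ((β x : G) : G ⧸ Z) := fun x =>
        QuotientGroup.congr_mk Z Z (β : G ≃* G) hmapZ x
      have hpow : ∀ (k : ℕ) (x : G), (β' ^ k) (x : G ⧸ Z) = ((β ^ k) x : G ⧸ Z) := by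
        intro k
        induction k with
        | zero => intro x; rfl
        | succ k ihk =>
          intro x
          rw [pow_succ', pow_succ']
          have h1 : (β' * β' ^ k) ((x : G) : G ⧸ Z) = β' ((β' ^ k) (x : G ⧸ Z)) := rfl
          rw [h1, ihk x, hcompat]
          rfl
      -- order of β' divides order of β
      have hβ'pow : β' ^ orderOf β = 1 := by
        ext q
        induction q using QuotientGroup.induction_on with
        | H x =>
          rw [hpow (orderOf β) x, pow_orderOf_eq_one β]
          rfl
      have hdvd : orderOf β' ∣ orderOf β := orderOf_dvd_of_pow_eq_one hβ'pow
      have hcop' : (orderOf β').Coprime ℓ := Nat.Coprime.coprime_dvd_left hdvd hcop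
      -- commutator condition in the quotient
      have hcomm' : ∀ q : G ⧸ Z, q⁻¹ * β' q ∈ commutator (G ⧸ Z) := by
        intro q
        induction q using QuotientGroup.induction_on with
        | H x =>
          rw [hcompat x]
          have h1 : ((x : G ⧸ Z))⁻¹ * ((β x : G) : G ⧸ Z)
              = ((x⁻¹ * β x : G) : G ⧸ Z) := by push_cast; rfl
          rw [h1]
          have h2 : ((x⁻¹ * β x : G) : G ⧸ Z)
              ∈ (commutator G).map (QuotientGroup.mk' Z) :=
            Subgroup.mem_map_of_mem _ (hcomm x)
          have h3 : (commutator G).map (QuotientGroup.mk' Z) ≤ commutator (G ⧸ Z) := by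
            rw [commutator, commutator, Subgroup.map_commutator]
            exact Subgroup.commutator_mono le_top le_top
          exact h3 h2
      -- cardinality drops
      have hlt : Nat.card (G ⧸ Z) < Nat.card G := by
        have h1 : Nat.card G = Nat.card (G ⧸ Z) * Nat.card Z :=
          Subgroup.card_eq_card_quotient_mul_card_subgroup Z
        have h2 : 2 ≤ Nat.card Z := Finite.one_lt_card_iff_nontrivial.mpr ‹Nontrivial Z›
        have h3 : 0 < Nat.card (G ⧸ Z) := Nat.card_pos
        calc Nat.card (G ⧸ Z) < Nat.card (G ⧸ Z) * 2 := by omega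
          _ ≤ Nat.card (G ⧸ Z) * Nat.card Z := Nat.mul_le_mul_left _ h2
          _ = Nat.card G := h1.symm
      have hβ'1 : β' = 1 := ih (by omega) (hG.to_quotient Z) β' hcop' hcomm'
      -- so β is trivial mod the center
      have hZmem : ∀ x : G, x⁻¹ * β x ∈ Z := by
        intro x
        have h2 : ((β x : G) : G ⧸ Z) = (x : G ⧸ Z) := by
          rw [← hcompat x, hβ'1]
          rfl
        have h1 : ((x⁻¹ * β x : G) : G ⧸ Z) = 1 := by
          calc ((x⁻¹ * β x : G) : G ⧸ Z)
              = ((x : G ⧸ Z))⁻¹ * ((β x : G) : G ⧸ Z) := by push_cast; rfl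
            _ = 1 := by rw [h2]; group
        exact (QuotientGroup.eq_one_iff _).mp h1
      -- the map x ↦ x⁻¹ β x is a homomorphism into the center
      set F : G →* Z :=
        { toFun := fun x => ⟨x⁻¹ * β x, hZmem x⟩
          map_one' := by ext; simp
          map_mul' := by
            intro x y
            ext
            show (x * y)⁻¹ * β (x * y) = (x⁻¹ * β x) * (y⁻¹ * β y)
            have hc : ∀ g : G, g * (x⁻¹ * β x) = (x⁻¹ * β x) * g := fun g =>
              (Subgroup.mem_center_iff.mp (hZmem x) g)
            rw [map_mul, mul_inv_rev]
            calc y⁻¹ * x⁻¹ * (β x * β y) = y⁻¹ * (x⁻¹ * β x) * β y := by group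
              _ = (x⁻¹ * β x) * y⁻¹ * β y := by rw [← hc y⁻¹]
              _ = (x⁻¹ * β x) * (y⁻¹ * β y) := by group } with hF
      have hFker : commutator G ≤ F.ker := by
        open IsMulCommutative in exact Abelianization.commutator_subset_ker F
      -- β fixes every value of F
      have hfix : ∀ x : G, β (x⁻¹ * β x) = x⁻¹ * β x := by
        intro x
        have h1 : F (x⁻¹ * β x) = 1 := hFker (hcomm x)
        have h2 : (x⁻¹ * β x)⁻¹ * β (x⁻¹ * β x) = 1 := by
          have := congrArg Subtype.val h1
          exact this
        calc β (x⁻¹ * β x) = (x⁻¹ * β x) * ((x⁻¹ * β x)⁻¹ * β (x⁻¹ * β x)) := by group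
          _ = x⁻¹ * β x := by rw [h2]; group
      -- iterate
      have hiter : ∀ (k : ℕ) (x : G), (β ^ k) x = x * (x⁻¹ * β x) ^ k := by
        intro k
        induction k with
        | zero => intro x; simp
        | succ k ihk =>
          intro x
          rw [pow_succ']
          have h1 : (β * β ^ k) x = β ((β ^ k) x) := rfl
          rw [h1, ihk x, map_mul, map_pow, hfix x, pow_succ', ← mul_assoc]
          congr 1
          group
      ext x
      have h1 : (β ^ orderOf β) x = x := by rw [pow_orderOf_eq_one]; rfl
      rw [hiter (orderOf β) x] at h1
      have h2 : (x⁻¹ * β x) ^ orderOf β = 1 := by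
        have := congrArg (x⁻¹ * ·) h1
        simpa [mul_assoc] using this
      have hdvd1 : orderOf (x⁻¹ * β x) ∣ orderOf β := orderOf_dvd_of_pow_eq_one h2
      obtain ⟨k, hk⟩ := hG (x⁻¹ * β x)
      have hdvd2 : orderOf (x⁻¹ * β x) ∣ ℓ ^ k := orderOf_dvd_of_pow_eq_one hk
      have hcop2 : (orderOf β).Coprime (ℓ ^ k) := hcop.pow_right k
      have : orderOf (x⁻¹ * β x) = 1 :=
        Nat.eq_one_of_dvd_coprimes hcop2 hdvd1 hdvd2
      have h3 : x⁻¹ * β x = 1 := orderOf_eq_one_iff.mp this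
      show β x = x
      calc β x = x * (x⁻¹ * β x) := by group
        _ = x := by rw [h3]; group



/-- Let `ℓ` be a prime and `G` a finite `ℓ`-group.  Let `σ₁` and `σ₂`
be automorphisms of `G` having the same order, coprime to `ℓ`.  Let `π : G → H` be a
surjective group homomorphism with `ker π` contained in the commutator subgroup of `G`,
such that `σ₁` and `σ₂` each map `ker π` onto `ker π` and induce the same automorphism
of `H`.  Then there exists an automorphism `τ` of `G` such that `σ₁ = τ⁻¹ ∘ σ₂ ∘ τ`,
`τ` maps `ker π` onto `ker π`, and `τ` induces the identity on `H`. -/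
theorem stmt2 {ℓ : ℕ} (hℓ : ℓ.Prime) {G H : Type*} [Group G] [Finite G] [Group H]
    (hG : IsPGroup ℓ G)
    (σ₁ σ₂ : MulAut G)
    (hord : orderOf σ₁ = orderOf σ₂)
    (hcop : Nat.Coprime (orderOf σ₁) ℓ)
    (π : G →* H) (hπ : Function.Surjective π)
    (hker : π.ker ≤ commutator G)
    (h₁ : π.ker.map σ₁.toMonoidHom = π.ker)
    (h₂ : π.ker.map σ₂.toMonoidHom = π.ker)
    (hsame : ∀ x : G, π (σ₁ x) = π (σ₂ x)) :
    ∃ τ : MulAut G, σ₁ = τ⁻¹ * σ₂ * τ ∧ π.ker.map τ.toMonoidHom = π.ker ∧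
      ∀ x : G, π (τ x) = π x := by
  haveI : Finite (MulAut G) :=
    Finite.of_injective (fun e : MulAut G => (e : G → G)) DFunLike.coe_injective
  -- the subgroup of automorphisms inducing the identity on H
  set A : Subgroup (MulAut G) :=
    { carrier := {α : MulAut G | ∀ x : G, π (α x) = π x}
      one_mem' := fun _ => rfl
      mul_mem' := by
        intro α γ hα hγ x
        rw [MulAut.mul_apply, hα (γ x), hγ x]
      inv_mem' := by
        intro α hα x
        have := hα (α⁻¹ x)
        rw [MulAut.apply_inv_self] at this
        exact this.symm } with hAdef
  have hmemA : ∀ α : MulAut G, α ∈ A ↔ ∀ x : G, π (α x) = π x := fun _ => Iff.rfl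
  -- membership in A gives ker-membership of x⁻¹ * α x
  have hcommA : ∀ α ∈ A, ∀ x : G, x⁻¹ * α x ∈ commutator G := by
    intro α hα x
    apply hker
    rw [MonoidHom.mem_ker, map_mul, map_inv, (hmemA α).mp hα x]
    group
  -- A is an ℓ-group
  have hApgroup : IsPGroup ℓ A := by
    rintro ⟨α, hα⟩
    have hMpos : 0 < orderOf α := orderOf_pos α
    set k := (orderOf α).factorization ℓ with hk
    refine ⟨k, ?_⟩
    have hβ1 : α ^ ℓ ^ k = 1 := by
      have hdvd : ℓ ^ k ∣ orderOf α := Nat.ordProj_dvd (orderOf α) ℓ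
      have hord2 : orderOf (α ^ ℓ ^ k) = orderOf α / ℓ ^ k := by
        rw [orderOf_pow' α (pow_ne_zero k hℓ.ne_zero), Nat.gcd_eq_right hdvd]
      have hcopβ : (orderOf (α ^ ℓ ^ k)).Coprime ℓ := by
        rw [hord2]
        exact (Nat.coprime_ordCompl hℓ hMpos.ne').symm
      exact key_triv hℓ (Nat.card G) le_rfl hG _ hcopβ
        (hcommA _ (pow_mem hα _))
    exact Subtype.ext (by rw [SubmonoidClass.coe_pow]; exact hβ1)
  -- σ₁ and σ₂ normalize A
  have hker₁ : ∀ w ∈ π.ker, σ₁ w ∈ π.ker := by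
    intro w hw
    rw [← h₁]
    exact Subgroup.mem_map_of_mem _ hw
  have hker₂ : ∀ w ∈ π.ker, σ₂ w ∈ π.ker := by
    intro w hw
    rw [← h₂]
    exact Subgroup.mem_map_of_mem _ hw
  have hker₁' : ∀ w ∈ π.ker, σ₁⁻¹ w ∈ π.ker := by
    intro w hw
    rw [← h₁] at hw
    obtain ⟨u, hu, rfl⟩ := hw
    rwa [show σ₁.toMonoidHom u = σ₁ u from rfl, MulAut.inv_apply_self]
  have hker₂' : ∀ w ∈ π.ker, σ₂⁻¹ w ∈ π.ker := by
    intro w hw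
    rw [← h₂] at hw
    obtain ⟨u, hu, rfl⟩ := hw
    rwa [show σ₂.toMonoidHom u = σ₂ u from rfl, MulAut.inv_apply_self]
  have hconj : ∀ σ : MulAut G, (∀ w ∈ π.ker, σ w ∈ π.ker) → ∀ α ∈ A, σ * α * σ⁻¹ ∈ A := by
    intro σ hσ α hα
    rw [hmemA]
    intro x
    rw [MulAut.mul_apply, MulAut.mul_apply]
    have hw : α (σ⁻¹ x) * (σ⁻¹ x)⁻¹ ∈ π.ker := by
      rw [MonoidHom.mem_ker, map_mul, map_inv, (hmemA α).mp hα (σ⁻¹ x)]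
      group
    have hdec : α (σ⁻¹ x) = (α (σ⁻¹ x) * (σ⁻¹ x)⁻¹) * σ⁻¹ x := by group
    rw [hdec, map_mul, MulAut.apply_inv_self]
    rw [map_mul]
    rw [MonoidHom.mem_ker.mp (hσ _ hw), one_mul]
  have hnorm : ∀ σ : MulAut G, (∀ w ∈ π.ker, σ w ∈ π.ker) → (∀ w ∈ π.ker, σ⁻¹ w ∈ π.ker) →
      σ ∈ Subgroup.normalizer (A : Set (MulAut G)) := by
    intro σ hσ hσ'
    rw [Subgroup.mem_normalizer_iff]
    intro α
    constructor
    · intro hα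
      exact hconj σ hσ α hα
    · intro hα
      have := hconj σ⁻¹ hσ' _ hα
      rwa [show σ⁻¹ * (σ * α * σ⁻¹) * σ⁻¹⁻¹ = α by group] at this
  have hσ₁norm : σ₁ ∈ Subgroup.normalizer (A : Set (MulAut G)) := hnorm σ₁ hker₁ hker₁'
  have hσ₂norm : σ₂ ∈ Subgroup.normalizer (A : Set (MulAut G)) := hnorm σ₂ hker₂ hker₂'
  -- σ₂⁻¹ * σ₁ lies in A
  have hstA : σ₂⁻¹ * σ₁ ∈ A := by
    rw [hmemA]
    intro x
    rw [MulAut.mul_apply]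
    have hw : σ₁ x * (σ₂ x)⁻¹ ∈ π.ker := by
      rw [MonoidHom.mem_ker, map_mul, map_inv, hsame x]
      group
    have hdec : σ₁ x = (σ₁ x * (σ₂ x)⁻¹) * σ₂ x := by group
    rw [hdec, map_mul, MulAut.inv_apply_self, map_mul,
      MonoidHom.mem_ker.mp (hker₂' _ hw), one_mul]
  -- set up the normalizer as ambient group
  set NA := Subgroup.normalizer (A : Set (MulAut G)) with hNA
  set A' : Subgroup NA := A.subgroupOf NA with hA'
  have hA'pgroup : IsPGroup ℓ A' :=
    hApgroup.of_equiv (Subgroup.subgroupOfEquivOfLe Subgroup.le_normalizer).symm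
  have hnpos : 0 < orderOf σ₁ := orderOf_pos σ₁
  set s : NA := ⟨σ₂, hσ₂norm⟩ with hs
  set t : NA := ⟨σ₁, hσ₁norm⟩ with ht
  have hstmem : s⁻¹ * t ∈ A' := by
    rw [hA', Subgroup.mem_subgroupOf]
    exact hstA
  have hspow : s ^ orderOf σ₁ = 1 := by
    apply Subtype.ext
    rw [SubmonoidClass.coe_pow]
    show σ₂ ^ orderOf σ₁ = 1
    rw [hord]
    exact pow_orderOf_eq_one σ₂
  have htpow : t ^ orderOf σ₁ = 1 := by
    apply Subtype.ext
    rw [SubmonoidClass.coe_pow]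
    show σ₁ ^ orderOf σ₁ = 1
    exact pow_orderOf_eq_one σ₁
  obtain ⟨τ', hτ'A', hτ'eq⟩ := pgroup_conj hℓ (Nat.card A') A' le_rfl hA'pgroup
    hnpos hcop s t hstmem hspow htpow
  set τ : MulAut G := ((τ' : NA) : MulAut G) with hτ
  have hτA : τ ∈ A := Subgroup.mem_subgroupOf.mp hτ'A'
  have hτfix : ∀ x : G, π (τ x) = π x := (hmemA τ).mp hτA
  refine ⟨τ, ?_, ?_, hτfix⟩
  · -- σ₁ = τ⁻¹ * σ₂ * τ
    have := congrArg (fun z : NA => (z : MulAut G)) hτ'eq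
    simpa using this.symm
  · -- τ maps ker π onto ker π
    apply le_antisymm
    · rintro _ ⟨w, hw, rfl⟩
      show τ w ∈ π.ker
      rw [MonoidHom.mem_ker, hτfix w]
      exact hw
    · intro w hw
      have hτinv : τ⁻¹ ∈ A := inv_mem hτA
      refine ⟨τ⁻¹ w, ?_, ?_⟩
      · show τ⁻¹ w ∈ π.ker
        rw [MonoidHom.mem_ker, (hmemA _).mp hτinv w]
        exact hw
      · show τ (τ⁻¹ w) = w
        exact MulAut.apply_inv_self G τ w
end

section
/- Let Γ be a finite group acting by automorphisms on finite groups E and H, and let t ≥ 1 be an integer. For a tuple (x₁, …, x_t) ∈ E^t, let N(x₁, …, x_t) denote the normal subgroup of E generated by the Γ-orbits of x₁, …, x_t; this subgroup is stable under the Γ-action, so the quotient E/N(x₁, …, x_t) carries an induced Γ-action. Then |H|^t · ∑_{(x₁,…,x_t) ∈ E^t} #Sur_Γ(E/N(x₁,…,x_t), H) = |E|^t · #Sur_Γ(E, H). -/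
open Finset

/-- Equivariant surjections from the quotient correspond to equivariant surjections
from `E` killing the `x i`. -/
private def surEquiv {Γ E H : Type*} [Group Γ] [Group E] [Group H]
    (a : Γ →* MulAut E) (b : Γ →* MulAut H) {t : ℕ} (x : Fin t → E) :
    {f : (E ⧸ Subgroup.normalClosure {e : E | ∃ i γ, e = a γ (x i)}) →* H //
        Function.Surjective f ∧
          ∀ (γ : Γ) (e : E),
            f (QuotientGroup.mk (a γ e)) = b γ (f (QuotientGroup.mk e))} ≃
    {g : E →* H //
        (Function.Surjective g ∧ ∀ (γ : Γ) (e : E), g (a γ e) = b γ (g e)) ∧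
          ∀ i, g (x i) = 1} where
  toFun f := ⟨f.1.comp (QuotientGroup.mk' _),
    ⟨⟨f.2.1.comp (QuotientGroup.mk'_surjective _), fun γ e => f.2.2 γ e⟩,
     fun i => by
       have hx : (QuotientGroup.mk (x i) :
           E ⧸ Subgroup.normalClosure {e : E | ∃ i γ, e = a γ (x i)}) = 1 :=
         (QuotientGroup.eq_one_iff _).mpr
           (Subgroup.subset_normalClosure ⟨i, 1, by simp⟩)
       show f.1 (QuotientGroup.mk (x i)) = 1
       rw [hx, map_one]⟩⟩
  invFun g := by
    have hker : ∀ e ∈ Subgroup.normalClosure {e : E | ∃ i γ, e = a γ (x i)},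
        g.1 e = 1 := by
      have hle : Subgroup.normalClosure {e : E | ∃ i γ, e = a γ (x i)} ≤ g.1.ker := by
        apply Subgroup.normalClosure_le_normal
        rintro e ⟨i, γ, rfl⟩
        exact MonoidHom.mem_ker.mpr (by rw [g.2.1.2 γ (x i), g.2.2 i, map_one])
      exact fun e he => MonoidHom.mem_ker.mp (hle he)
    refine ⟨QuotientGroup.lift _ g.1 hker, ?_, ?_⟩
    · intro h
      obtain ⟨e, he⟩ := g.2.1.1 h
      exact ⟨QuotientGroup.mk e, he⟩
    · intro γ e
      exact g.2.1.2 γ e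
  left_inv f := Subtype.ext (QuotientGroup.monoidHom_ext _ (by ext e; rfl))
  right_inv g := Subtype.ext (by ext e; rfl)

private def kerEquiv {E H : Type*} [Group E] [Group H] {t : ℕ} (g : E →* H) :
    {x : Fin t → E // ∀ i, g (x i) = 1} ≃ (Fin t → g.ker) where
  toFun x i := ⟨x.1 i, MonoidHom.mem_ker.mpr (x.2 i)⟩
  invFun y := ⟨fun i => (y i : E), fun i => MonoidHom.mem_ker.mp (y i).2⟩
  left_inv x := rfl
  right_inv y := rfl

/-- Let `Γ` be a finite group acting by automorphisms on finite groups
`E` and `H`, and let `t ≥ 1`.  For `(x₁, …, x_t) ∈ E^t`, let `N(x₁, …, x_t)` be the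
normal subgroup of `E` generated by the `Γ`-orbits of the `xᵢ`; the quotient
`E/N(x₁,…,x_t)` then carries an induced `Γ`-action (characterized by
`γ • (mk e) = mk (γ • e)`).  Then
`|H|^t · ∑_{(x₁,…,x_t)} #Sur_Γ(E/N(x₁,…,x_t), H) = |E|^t · #Sur_Γ(E, H)`. -/
theorem stmt3 {Γ E H : Type*} [Group Γ] [Fintype Γ] [Group E] [Fintype E]
    [Group H] [Fintype H]
    (a : Γ →* MulAut E) (b : Γ →* MulAut H) (t : ℕ) (ht : 1 ≤ t) :
    Fintype.card H ^ t *
        ∑ x : Fin t → E,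
          Nat.card {f : (E ⧸ Subgroup.normalClosure {e : E | ∃ i γ, e = a γ (x i)}) →* H //
            Function.Surjective f ∧
              ∀ (γ : Γ) (e : E),
                f (QuotientGroup.mk (a γ e)) = b γ (f (QuotientGroup.mk e))} =
      Fintype.card E ^ t *
        Nat.card {f : E →* H //
          Function.Surjective f ∧ ∀ (γ : Γ) (e : E), f (a γ e) = b γ (f e)} := by
  classical
  haveI : Finite (E →* H) := Finite.of_injective _ DFunLike.coe_injective
  haveI : Fintype (E →* H) := Fintype.ofFinite _
  have h1 : ∀ x : Fin t → E,
      Nat.card {f : (E ⧸ Subgroup.normalClosure {e : E | ∃ i γ, e = a γ (x i)}) →* H //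
          Function.Surjective f ∧ ∀ (γ : Γ) (e : E),
            f (QuotientGroup.mk (a γ e)) = b γ (f (QuotientGroup.mk e))} =
        ∑ g : E →* H,
          if (Function.Surjective g ∧ ∀ (γ : Γ) (e : E), g (a γ e) = b γ (g e)) ∧
              ∀ i, g (x i) = 1 then 1 else 0 := by
    intro x
    rw [Nat.card_congr (surEquiv a b x), Nat.card_eq_fintype_card,
      Fintype.card_subtype, Finset.card_filter]
  have h2 : ∀ g : E →* H,
      (∑ x : Fin t → E,
          if (Function.Surjective g ∧ ∀ (γ : Γ) (e : E), g (a γ e) = b γ (g e)) ∧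
              ∀ i, g (x i) = 1 then 1 else 0) =
        if Function.Surjective g ∧ ∀ (γ : Γ) (e : E), g (a γ e) = b γ (g e) then
          Fintype.card g.ker ^ t else 0 := by
    intro g
    by_cases hg : Function.Surjective g ∧ ∀ (γ : Γ) (e : E), g (a γ e) = b γ (g e)
    · rw [if_pos hg]
      calc (∑ x : Fin t → E,
            if (Function.Surjective g ∧ ∀ (γ : Γ) (e : E), g (a γ e) = b γ (g e)) ∧
                ∀ i, g (x i) = 1 then 1 else 0)
          = ∑ x : Fin t → E, if ∀ i, g (x i) = 1 then 1 else 0 :=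
            Finset.sum_congr rfl fun x _ => if_congr (and_iff_right hg) rfl rfl
        _
          = Fintype.card {x : Fin t → E // ∀ i, g (x i) = 1} := by
            rw [Fintype.card_subtype, Finset.card_filter]
        _ = Fintype.card (Fin t → g.ker) := Fintype.card_congr (kerEquiv g)
        _ = Fintype.card g.ker ^ t := by simp
    · simp [hg]
  have h3 : ∀ g : E →* H, Function.Surjective g →
      Fintype.card H * Fintype.card g.ker = Fintype.card E := by
    intro g hg
    have h := Subgroup.card_eq_card_quotient_mul_card_subgroup (s := g.ker)
    rw [Nat.card_congr (QuotientGroup.quotientKerEquivOfSurjective g hg).toEquiv] at h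
    simpa [Nat.card_eq_fintype_card] using h.symm
  calc Fintype.card H ^ t *
        ∑ x : Fin t → E,
          Nat.card {f : (E ⧸ Subgroup.normalClosure {e : E | ∃ i γ, e = a γ (x i)}) →* H //
            Function.Surjective f ∧
              ∀ (γ : Γ) (e : E),
                f (QuotientGroup.mk (a γ e)) = b γ (f (QuotientGroup.mk e))}
      = Fintype.card H ^ t * ∑ g : E →* H, ∑ x : Fin t → E,
          if (Function.Surjective g ∧ ∀ (γ : Γ) (e : E), g (a γ e) = b γ (g e)) ∧
              ∀ i, g (x i) = 1 then 1 else 0 := by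
        rw [Finset.sum_congr rfl fun x _ => h1 x, Finset.sum_comm]
    _ = ∑ g : E →* H,
          if Function.Surjective g ∧ ∀ (γ : Γ) (e : E), g (a γ e) = b γ (g e) then
            Fintype.card E ^ t else 0 := by
        rw [Finset.mul_sum]
        refine Finset.sum_congr rfl fun g _ => ?_
        rw [h2 g]
        by_cases hg : Function.Surjective g ∧ ∀ (γ : Γ) (e : E), g (a γ e) = b γ (g e)
        · rw [if_pos hg, if_pos hg, ← mul_pow, h3 g hg.1]
        · simp [hg]
    _ = Fintype.card E ^ t *
        Nat.card {f : E →* H //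
          Function.Surjective f ∧ ∀ (γ : Γ) (e : E), f (a γ e) = b γ (f e)} := by
        rw [Nat.card_eq_fintype_card, Fintype.card_subtype, ← Finset.sum_filter,
          Finset.sum_const, smul_eq_mul, mul_comm]
end

section
/- Let π : G̃ → G be a stem extension of groups (a surjective homomorphism whose kernel is contained both in the center of G̃ and in the commutator subgroup of G̃) with ker π finite. Let F be the free group on generators g₁, …, g_m and let ρ : F → G be a surjective homomorphism such that for each i the element ρ(gᵢ) has finite order coprime to |ker π|. Then there exists a unique surjective homomorphism ρ̃ : F → G̃ such that π ∘ ρ̃ = ρ and the order of ρ̃(gᵢ) equals the order of ρ(gᵢ) for each i = 1, …, m. -/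
open scoped commutatorElement

private lemma comm_central {G' : Type*} [Group G'] {k₁ k₂ : G'}
    (h₁ : k₁ ∈ Subgroup.center G') (h₂ : k₂ ∈ Subgroup.center G') (h g : G') :
    ⁅h * k₁, g * k₂⁆ = ⁅h, g⁆ := by
  rw [Subgroup.mem_center_iff] at h₁ h₂
  have e1 : k₁ * (g * k₂) * k₁⁻¹ = g * k₂ := by rw [← h₁ (g * k₂), mul_inv_cancel_right]
  have e2 : k₂ * h⁻¹ * k₂⁻¹ = h⁻¹ := by rw [← h₂ h⁻¹, mul_inv_cancel_right]
  calc ⁅h * k₁, g * k₂⁆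
      = h * (k₁ * (g * k₂) * k₁⁻¹) * h⁻¹ * (g * k₂)⁻¹ := by group
    _ = h * (g * k₂) * h⁻¹ * (g * k₂)⁻¹ := by rw [e1]
    _ = h * g * (k₂ * h⁻¹ * k₂⁻¹) * g⁻¹ := by group
    _ = h * g * h⁻¹ * g⁻¹ := by rw [e2]
    _ = ⁅h, g⁆ := by group

private lemma lift_order {G' G : Type*} [Group G'] [Group G] (π : G' →* G)
    (hfin : Finite π.ker) (g : G) (hg : ∃ x, π x = g) (hfo : IsOfFinOrder g)
    (hcop : Nat.Coprime (orderOf g) (Nat.card π.ker)) :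
    ∃ x : G', π x = g ∧ orderOf x = orderOf g := by
  obtain ⟨x₀, hx₀⟩ := hg
  set d := orderOf g with hd
  set n := Nat.card π.ker with hn
  have hker : x₀ ^ d ∈ π.ker := by
    rw [MonoidHom.mem_ker, map_pow, hx₀, pow_orderOf_eq_one]
  have hdn : x₀ ^ (d * n) = 1 := by
    have : (⟨x₀ ^ d, hker⟩ : π.ker) ^ n = 1 := pow_card_eq_one'
    have := congrArg (Subtype.val) this
    simpa [pow_mul] using this
  obtain ⟨a, b, hab⟩ : ∃ a b : ℤ, (d : ℤ) * a + (n : ℤ) * b = 1 := by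
    refine ⟨Nat.gcdA d n, Nat.gcdB d n, ?_⟩
    have := Nat.gcd_eq_gcd_ab d n
    rw [hcop] at this
    push_cast at this
    linarith
  refine ⟨x₀ ^ ((n : ℤ) * b), ?_, ?_⟩
  · have : π (x₀ ^ ((n : ℤ) * b)) = g ^ ((n : ℤ) * b) := by rw [map_zpow, hx₀]
    rw [this]
    have hnb : (n : ℤ) * b = 1 - (d : ℤ) * a := by linarith
    rw [hnb, zpow_sub, zpow_one, zpow_mul, zpow_natCast, pow_orderOf_eq_one, one_zpow,
      inv_one, mul_one]
  · have hx1 : (x₀ ^ ((n : ℤ) * b)) ^ d = 1 := by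
      rw [← zpow_natCast, ← zpow_mul]
      have : (n : ℤ) * b * d = (d * n : ℕ) * b := by push_cast; ring
      rw [this, zpow_mul, zpow_natCast, hdn, one_zpow]
    have h1 : orderOf (x₀ ^ ((n : ℤ) * b)) ∣ d := orderOf_dvd_of_pow_eq_one hx1
    have h2 : d ∣ orderOf (x₀ ^ ((n : ℤ) * b)) := by
      have := orderOf_map_dvd π (x₀ ^ ((n : ℤ) * b))
      rw [map_zpow, hx₀] at this
      have hg : orderOf (g ^ ((n : ℤ) * b)) = d := by
        have hnb : (n : ℤ) * b = 1 - (d : ℤ) * a := by linarith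
        rw [hnb, zpow_sub, zpow_one, zpow_mul, zpow_natCast, pow_orderOf_eq_one, one_zpow,
          inv_one, mul_one]
      rw [hg] at this
      exact this
    exact Nat.dvd_antisymm h1 h2

/-- Let `π : G̃ → G` be a stem extension of groups with finite kernel.
Let `F` be the free group on generators `g₁, …, g_m` and `ρ : F → G` a surjective
homomorphism such that each `ρ(gᵢ)` has finite order coprime to `|ker π|`.  Then there
is a unique surjective homomorphism `ρ̃ : F → G̃` with `π ∘ ρ̃ = ρ` and
`ord(ρ̃(gᵢ)) = ord(ρ(gᵢ))` for all `i`. -/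
theorem stmt4 {G' G : Type*} [Group G'] [Group G] (π : G' →* G)
    (hsurj : Function.Surjective π)
    (hcenter : π.ker ≤ Subgroup.center G')
    (hcomm : π.ker ≤ commutator G')
    (hfin : Finite π.ker)
    (m : ℕ) (ρ : FreeGroup (Fin m) →* G) (hρ : Function.Surjective ρ)
    (hord : ∀ i : Fin m, IsOfFinOrder (ρ (FreeGroup.of i)) ∧
      Nat.Coprime (orderOf (ρ (FreeGroup.of i))) (Nat.card π.ker)) :
    ∃! ρ' : FreeGroup (Fin m) →* G',
      Function.Surjective ρ' ∧ π.comp ρ' = ρ ∧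
        ∀ i : Fin m, orderOf (ρ' (FreeGroup.of i)) = orderOf (ρ (FreeGroup.of i)) := by
  choose f hf hford using fun i =>
    lift_order π hfin (ρ (FreeGroup.of i)) (hsurj _) (hord i).1 (hord i).2
  set ρ' : FreeGroup (Fin m) →* G' := FreeGroup.lift f with hρ'
  have hlift : ∀ i, ρ' (FreeGroup.of i) = f i := fun i => FreeGroup.lift_apply_of
  have hcompat : π.comp ρ' = ρ := by
    apply FreeGroup.ext_hom
    intro i
    simp only [MonoidHom.comp_apply, hlift, hf]
  have hcompat' : ∀ w, π (ρ' w) = ρ w := fun w => DFunLike.congr_fun hcompat w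
  have decomp : ∀ x : G', ∃ w : FreeGroup (Fin m), ∃ k ∈ π.ker, x = ρ' w * k := by
    intro x
    obtain ⟨w, hw⟩ := hρ (π x)
    refine ⟨w, (ρ' w)⁻¹ * x, ?_, by group⟩
    rw [MonoidHom.mem_ker, map_mul, map_inv, hcompat', hw]
    simp
  have hsub : commutator G' ≤ ρ'.range := by
    rw [commutator_def, Subgroup.commutator_le]
    intro a _ b _
    obtain ⟨w₁, k₁, hk₁, rfl⟩ := decomp a
    obtain ⟨w₂, k₂, hk₂, rfl⟩ := decomp b
    rw [comm_central (hcenter hk₁) (hcenter hk₂)]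
    exact ⟨⁅w₁, w₂⁆, by simp [map_commutatorElement]⟩
  have hsurj' : Function.Surjective ρ' := by
    intro x
    obtain ⟨w, k, hk, rfl⟩ := decomp x
    have : ρ' w * k ∈ ρ'.range := mul_mem ⟨w, rfl⟩ (hsub (hcomm hk))
    exact this
  refine ⟨ρ', ⟨hsurj', hcompat, fun i => by rw [hlift]; exact hford i⟩, ?_⟩
  rintro ρ'' ⟨hs'', hc'', ho''⟩
  apply FreeGroup.ext_hom
  intro i
  set d := orderOf (ρ (FreeGroup.of i)) with hd
  set n := Nat.card π.ker with hn
  set u := ρ'' (FreeGroup.of i) with hu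
  set v := ρ' (FreeGroup.of i) with hv
  have hz : u * v⁻¹ ∈ π.ker := by
    rw [MonoidHom.mem_ker, map_mul, map_inv]
    have h1 : π u = ρ (FreeGroup.of i) := DFunLike.congr_fun hc'' (FreeGroup.of i)
    have h2 : π v = ρ (FreeGroup.of i) := hcompat' (FreeGroup.of i)
    rw [h1, h2]
    simp
  set z := u * v⁻¹ with hzdef
  have hcz : Commute z v := by
    have := Subgroup.mem_center_iff.mp (hcenter hz) v
    exact this.symm
  have hud : u ^ d = 1 := by
    rw [hd, ← ho'' i]; exact pow_orderOf_eq_one u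
  have hvd : v ^ d = 1 := by
    have : orderOf v = d := by rw [hv, hlift]; exact hford i
    rw [← this, pow_orderOf_eq_one]
  have hzd : z ^ d = 1 := by
    have huz : u = z * v := by rw [hzdef]; group
    rw [huz, hcz.mul_pow, hvd, mul_one] at hud
    exact hud
  have hzn : z ^ n = 1 := by
    have : (⟨z, hz⟩ : π.ker) ^ n = 1 := pow_card_eq_one'
    exact congrArg Subtype.val this
  have hz1 : z = 1 := by
    rw [← orderOf_eq_one_iff]
    have h1 : orderOf z ∣ d := orderOf_dvd_of_pow_eq_one hzd
    have h2 : orderOf z ∣ n := orderOf_dvd_of_pow_eq_one hzn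
    have := Nat.dvd_gcd h1 h2
    rwa [Nat.Coprime.gcd_eq_one (hord i).2, Nat.dvd_one] at this
  have huv1 : u * v⁻¹ = 1 := by rw [← hzdef]; exact hz1
  exact mul_inv_eq_one.mp huv1
end

section
/- Let G be a finite group, n a positive integer, and let π₁ : T₁ → G and π₂ : T₂ → G both be (n)′-Schur coverings of G, that is, stem extensions whose kernels have order coprime to n and of maximal order among all stem extensions of G with kernel of order coprime to n. Assume additionally that the order of the abelianization of G is coprime to |ker π₁|. Then the two coverings are isomorphic as extensions: there exists a group isomorphism φ : T₁ → T₂ with π₂ ∘ φ = π₁. -/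
/-- A stem extension: a surjective group homomorphism whose kernel is contained both in
the center and in the commutator subgroup of the source. -/
def IsStemExtension {G' G : Type*} [Group G'] [Group G] (π : G' →* G) : Prop :=
  Function.Surjective π ∧ π.ker ≤ Subgroup.center G' ∧ π.ker ≤ commutator G'

/-- An `(n)'`-Schur covering of `G`: a stem extension whose kernel has order coprime to
`n` and of maximal order among all stem extensions of `G` with kernel of order coprime
to `n`. -/
def IsSchurCovering (n : ℕ) {T G : Type*} [Group T] [Group G] (π : T →* G) : Prop :=
  IsStemExtension π ∧ (Nat.card π.ker).Coprime n ∧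
    ∀ (T' : Type) [Group T'] (π' : T' →* G),
      IsStemExtension π' → (Nat.card π'.ker).Coprime n →
        Nat.card π'.ker ≤ Nat.card π.ker

open scoped commutatorElement

section Aux

variable {H : Type*} [Group H]

lemma stmt6_comm_left {k : H} (hk : k ∈ Subgroup.center H) (s t : H) :
    ⁅k * s, t⁆ = ⁅s, t⁆ := by
  have hc : ∀ g : H, g * k = k * g := fun g => (Subgroup.mem_center_iff.mp hk g)
  have hk1 : k⁻¹ * t⁻¹ = t⁻¹ * k⁻¹ := by
    rw [← mul_inv_rev, ← mul_inv_rev, hc t]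
  have hk2 : k * (s * t * s⁻¹ * t⁻¹) = s * t * s⁻¹ * t⁻¹ * k := (hc _).symm
  calc ⁅k * s, t⁆ = k * s * t * s⁻¹ * (k⁻¹ * t⁻¹) := by
        rw [commutatorElement_def]; group
    _ = k * s * t * s⁻¹ * (t⁻¹ * k⁻¹) := by rw [hk1]
    _ = k * (s * t * s⁻¹ * t⁻¹) * k⁻¹ := by group
    _ = s * t * s⁻¹ * t⁻¹ * k * k⁻¹ := by rw [hk2]
    _ = ⁅s, t⁆ := by rw [commutatorElement_def]; group

lemma stmt6_comm_central {k k' : H} (hk : k ∈ Subgroup.center H)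
    (hk' : k' ∈ Subgroup.center H) (s t : H) :
    ⁅k * s, k' * t⁆ = ⁅s, t⁆ := by
  rw [stmt6_comm_left hk]
  rw [← commutatorElement_inv, stmt6_comm_left hk', commutatorElement_inv]

end Aux

/-- Let `G` be a finite group, `n ≥ 1`, and `π₁ : T₁ → G`,
`π₂ : T₂ → G` two `(n)'`-Schur coverings of `G`.  If the order of the abelianization of
`G` is coprime to `|ker π₁|`, then the two coverings are isomorphic as extensions. -/
theorem stmt6 {G T₁ T₂ : Type} [Group G] [Fintype G] [Group T₁] [Group T₂]
    (n : ℕ) (hn : 0 < n) (π₁ : T₁ →* G) (π₂ : T₂ →* G)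
    (h₁ : IsSchurCovering n π₁) (h₂ : IsSchurCovering n π₂)
    (hab : (Nat.card (Abelianization G)).Coprime (Nat.card π₁.ker)) :
    ∃ φ : T₁ ≃* T₂, ∀ x : T₁, π₂ (φ x) = π₁ x := by
  classical
  obtain ⟨⟨hs₁, hc₁, hd₁⟩, hcop₁, hmax₁⟩ := h₁
  obtain ⟨⟨hs₂, hc₂, hd₂⟩, hcop₂, hmax₂⟩ := h₂
  set m₁ := Nat.card π₁.ker with hm₁def
  set m₂ := Nat.card π₂.ker with hm₂def
  have hm12 : m₁ = m₂ :=
    le_antisymm (hmax₂ T₁ π₁ ⟨hs₁, hc₁, hd₁⟩ hcop₁) (hmax₁ T₂ π₂ ⟨hs₂, hc₂, hd₂⟩ hcop₂)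
  -- positivity of kernel cardinalities
  have hone : (1 : ℕ) ≤ m₁ := by
    have hid : IsStemExtension (MonoidHom.id G) :=
      ⟨Function.surjective_id, by simp [MonoidHom.ker_id], by simp [MonoidHom.ker_id]⟩
    have := hmax₁ G (MonoidHom.id G) hid (by
      rw [MonoidHom.ker_id, Subgroup.card_bot]; exact Nat.coprime_one_left n)
    rwa [MonoidHom.ker_id, Subgroup.card_bot] at this
  have hm₁pos : 0 < m₁ := hone
  have hm₂pos : 0 < m₂ := hm12 ▸ hm₁pos
  -- finiteness
  have hfin₁ : Finite π₁.ker := Nat.finite_of_card_ne_zero (by omega)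
  have hfin₂ : Finite π₂.ker := Nat.finite_of_card_ne_zero (by omega)
  have hfq₁ : Finite (T₁ ⧸ π₁.ker) :=
    Finite.of_equiv G (QuotientGroup.quotientKerEquivOfSurjective π₁ hs₁).symm.toEquiv
  have hfq₂ : Finite (T₂ ⧸ π₂.ker) :=
    Finite.of_equiv G (QuotientGroup.quotientKerEquivOfSurjective π₂ hs₂).symm.toEquiv
  have hfinT₁ : Finite T₁ :=
    Finite.of_equiv _ (Subgroup.groupEquivQuotientProdSubgroup (s := π₁.ker)).symm
  have hfinT₂ : Finite T₂ :=
    Finite.of_equiv _ (Subgroup.groupEquivQuotientProdSubgroup (s := π₂.ker)).symm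
  have hcardT₁ : Nat.card T₁ = Nat.card G * m₁ := by
    rw [Subgroup.card_eq_card_quotient_mul_card_subgroup π₁.ker,
      Nat.card_congr (QuotientGroup.quotientKerEquivOfSurjective π₁ hs₁).toEquiv]
  have hcardT₂ : Nat.card T₂ = Nat.card G * m₂ := by
    rw [Subgroup.card_eq_card_quotient_mul_card_subgroup π₂.ker,
      Nat.card_congr (QuotientGroup.quotientKerEquivOfSurjective π₂ hs₂).toEquiv]
  -- the pullback
  set P : Subgroup (T₁ × T₂) :=
    MonoidHom.eqLocus (π₁.comp (MonoidHom.fst T₁ T₂)) (π₂.comp (MonoidHom.snd T₁ T₂)) with hPdef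
  have hmemP : ∀ x : T₁ × T₂, x ∈ P ↔ π₁ x.1 = π₂ x.2 := fun x => Iff.rfl
  set p₁ : ↥P →* T₁ := (MonoidHom.fst T₁ T₂).comp P.subtype with hp₁def
  set p₂ : ↥P →* T₂ := (MonoidHom.snd T₁ T₂).comp P.subtype with hp₂def
  set ρ : ↥P →* G := π₁.comp p₁ with hρdef
  have hρeq : ∀ x : ↥P, ρ x = π₂ (p₂ x) := fun x => x.2
  have hp₁surj : Function.Surjective p₁ := by
    intro t
    obtain ⟨t₂, ht₂⟩ := hs₂ (π₁ t)
    exact ⟨⟨(t, t₂), ht₂.symm⟩, rfl⟩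
  have hp₂surj : Function.Surjective p₂ := by
    intro t
    obtain ⟨t₁, ht₁⟩ := hs₁ (π₂ t)
    exact ⟨⟨(t₁, t), ht₁⟩, rfl⟩
  have hρsurj : Function.Surjective ρ := hs₁.comp hp₁surj
  set K : Subgroup ↥P := ρ.ker with hKdef
  have hmemK : ∀ x : ↥P, x ∈ K ↔ π₁ (p₁ x) = 1 := fun x => Iff.rfl
  have hmemK₂ : ∀ x : ↥P, x ∈ K → π₂ (p₂ x) = 1 := by
    intro x hx
    rw [← hρeq x]; exact hx
  have hKcentral : K ≤ Subgroup.center ↥P := by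
    intro x hx
    rw [Subgroup.mem_center_iff]
    intro y
    have h1 : (x : T₁ × T₂).1 ∈ π₁.ker := hx
    have h2 : (x : T₁ × T₂).2 ∈ π₂.ker := hmemK₂ x hx
    have c1 : (y : T₁ × T₂).1 * (x : T₁ × T₂).1 = (x : T₁ × T₂).1 * (y : T₁ × T₂).1 :=
      Subgroup.mem_center_iff.mp (hc₁ h1) _
    have c2 : (y : T₁ × T₂).2 * (x : T₁ × T₂).2 = (x : T₁ × T₂).2 * (y : T₁ × T₂).2 :=
      Subgroup.mem_center_iff.mp (hc₂ h2) _
    ext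
    · exact c1
    · exact c2
  -- cardinality of K
  have hcardK : Nat.card K = m₁ * m₂ := by
    have e : ↥K ≃ ↥π₁.ker × ↥π₂.ker :=
      { toFun := fun x => (⟨(x.1 : T₁ × T₂).1, x.2⟩, ⟨(x.1 : T₁ × T₂).2, hmemK₂ x.1 x.2⟩)
        invFun := fun y => ⟨⟨(y.1.1, y.2.1), by
          rw [hmemP]
          have h1 : π₁ y.1.1 = 1 := y.1.2
          have h2 : π₂ y.2.1 = 1 := y.2.2
          rw [h1, h2]⟩, by
          have h1 : π₁ y.1.1 = 1 := y.1.2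
          exact h1⟩
        left_inv := fun x => by ext <;> rfl
        right_inv := fun y => by ext <;> rfl }
    rw [Nat.card_congr e, Nat.card_prod]
  have hcardKn : (Nat.card K).Coprime n := by
    rw [hcardK]; exact Nat.Coprime.mul hcop₁ hcop₂
  have hcardKab : (Nat.card K).Coprime (Nat.card (Abelianization G)) := by
    rw [hcardK]
    exact Nat.Coprime.mul hab.symm (hm12 ▸ hab.symm)
  -- abelianization of P
  have hofsurj : Function.Surjective (Abelianization.of : ↥P →* Abelianization ↥P) := by
    intro b
    obtain ⟨x, hx⟩ := Quot.exists_rep b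
    exact ⟨x, hx⟩
  set KA : Subgroup (Abelianization ↥P) := K.map Abelianization.of with hKAdef
  set ψ : Abelianization ↥P →* Abelianization G := Abelianization.map ρ with hψdef
  have hψsurj : Function.Surjective ψ := by
    intro b
    obtain ⟨g, hg⟩ := Quot.exists_rep b
    obtain ⟨p, hp⟩ := hρsurj g
    exact ⟨Abelianization.of p, by rw [Abelianization.map_of, hp]; exact hg⟩
  have hmapcomm : (commutator ↥P).map ρ = commutator G := by
    rw [commutator_def, Subgroup.map_commutator,
      Subgroup.map_top_of_surjective ρ hρsurj, commutator_def]
  have hkerψ : ψ.ker = KA := by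
    apply le_antisymm
    · intro x hx
      obtain ⟨p, rfl⟩ := hofsurj x
      have hx' : Abelianization.of (ρ p) = 1 := by
        rw [MonoidHom.mem_ker] at hx
        rwa [Abelianization.map_of] at hx
      have hρp : ρ p ∈ commutator G := (QuotientGroup.eq_one_iff _).mp hx'
      rw [← hmapcomm] at hρp
      obtain ⟨c, hc, hcp⟩ := hρp
      refine ⟨p * c⁻¹, ?_, ?_⟩
      · show ρ (p * c⁻¹) = 1
        rw [map_mul, map_inv, hcp, mul_inv_cancel]
      · rw [map_mul, map_inv]
        have : Abelianization.of c = 1 := (QuotientGroup.eq_one_iff _).mpr hc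
        rw [this, inv_one, mul_one]
    · rintro x ⟨k, hk, rfl⟩
      rw [MonoidHom.mem_ker, Abelianization.map_of]
      have : ρ k = 1 := hk
      rw [this, map_one]
  have hindexKA : KA.index = Nat.card (Abelianization G) := by
    rw [← hkerψ, Subgroup.index_eq_card,
      Nat.card_congr (QuotientGroup.quotientKerEquivOfSurjective ψ hψsurj).toEquiv]
  have hcardKA_dvd : Nat.card KA ∣ Nat.card K :=
    Subgroup.card_dvd_of_surjective _ (Abelianization.of.subgroupMap_surjective K)
  have hcopKA : (Nat.card KA).Coprime KA.index := by
    rw [hindexKA]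
    exact Nat.Coprime.coprime_dvd_left hcardKA_dvd hcardKab
  obtain ⟨C, hC⟩ := Subgroup.exists_right_complement'_of_coprime hcopKA
  set S : Subgroup ↥P := C.comap (Abelianization.of : ↥P →* Abelianization ↥P) with hSdef
  have hcommS : commutator ↥P ≤ S := by
    intro c hc
    have : Abelianization.of c = 1 := (QuotientGroup.eq_one_iff _).mpr hc
    rw [hSdef, Subgroup.mem_comap, this]
    exact C.one_mem
  have hdecomp : ∀ p : ↥P, ∃ k ∈ K, ∃ s ∈ S, p = k * s := by
    intro p
    have hp : Abelianization.of p ∈ KA ⊔ C := by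
      rw [hC.sup_eq_top]; trivial
    obtain ⟨a, ha, c, hcmem, hac⟩ := Subgroup.mem_sup.mp hp
    obtain ⟨k, hk, rfl⟩ := ha
    refine ⟨k, hk, k⁻¹ * p, ?_, by group⟩
    rw [hSdef, Subgroup.mem_comap, map_mul, map_inv, ← hac]
    have : (Abelianization.of k)⁻¹ * (Abelianization.of k * c) = c := by group
    rw [this]
    exact hcmem
  have hSinterK : ∀ x : ↥P, x ∈ S → x ∈ K → x ∈ commutator ↥P := by
    intro x hxS hxK
    have h1 : Abelianization.of x ∈ KA := ⟨x, hxK, rfl⟩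
    have h2 : Abelianization.of x ∈ C := hxS
    have : Abelianization.of x ∈ KA ⊓ C := ⟨h1, h2⟩
    rw [disjoint_iff.mp hC.disjoint] at this
    exact (QuotientGroup.eq_one_iff _).mp this
  -- commutator of P is the image of commutator of S
  have hcommPS : commutator ↥P = (commutator ↥S).map S.subtype := by
    apply le_antisymm
    · rw [commutator_def, Subgroup.commutator_le]
      intro g₁ _ g₂ _
      obtain ⟨k, hk, s, hsS, rfl⟩ := hdecomp g₁
      obtain ⟨k', hk', s', hs'S, rfl⟩ := hdecomp g₂
      rw [stmt6_comm_central (hKcentral hk) (hKcentral hk')]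
      refine ⟨⁅(⟨s, hsS⟩ : ↥S), (⟨s', hs'S⟩ : ↥S)⁆, ?_, ?_⟩
      · exact Subgroup.commutator_mem_commutator (Subgroup.mem_top _) (Subgroup.mem_top _)
      · exact map_commutatorElement S.subtype _ _
    · rw [commutator_def ↥S, Subgroup.map_commutator, commutator_def ↥P]
      exact Subgroup.commutator_mono le_top le_top
  -- finiteness instances
  haveI : Finite (T₁ × T₂) := Finite.instProd
  haveI : Finite ↥P := Subtype.finite
  haveI : Finite ↥S := Subtype.finite
  -- the restricted homomorphisms
  set qS : ↥S →* G := ρ.comp S.subtype with hqSdef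
  set r₁ : ↥S →* T₁ := p₁.comp S.subtype with hr₁def
  set r₂ : ↥S →* T₂ := p₂.comp S.subtype with hr₂def
  have hqSsurj : Function.Surjective qS := by
    intro g
    obtain ⟨p, hp⟩ := hρsurj g
    obtain ⟨k, hk, s, hsS, rfl⟩ := hdecomp p
    refine ⟨⟨s, hsS⟩, ?_⟩
    have hmul : ρ (k * s) = ρ k * ρ s := map_mul ρ k s
    have hk1 : ρ k = 1 := hk
    show ρ s = g
    rw [← hp, hmul, hk1, one_mul]
  have hkerqS_K : ∀ x : ↥S, x ∈ qS.ker → (x : ↥P) ∈ K := fun x hx => hx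
  have hkerqS_comm : qS.ker ≤ commutator ↥S := by
    intro x hx
    have h1 : (x : ↥P) ∈ commutator ↥P := hSinterK _ x.2 (hkerqS_K x hx)
    rw [hcommPS] at h1
    obtain ⟨y, hy, hyx⟩ := h1
    have hxy : y = x := Subtype.ext hyx
    rwa [hxy] at hy
  have hkerqS_center : qS.ker ≤ Subgroup.center ↥S := by
    intro x hx
    rw [Subgroup.mem_center_iff]
    intro y
    exact Subtype.ext (Subgroup.mem_center_iff.mp (hKcentral (hkerqS_K x hx)) ↑y)
  have hstemqS : IsStemExtension qS := ⟨hqSsurj, hkerqS_center, hkerqS_comm⟩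
  have hkerdvd : Nat.card qS.ker ∣ Nat.card K := by
    let ι : ↥qS.ker →* ↥K :=
      { toFun := fun x => ⟨(x : ↥S), hkerqS_K _ x.2⟩
        map_one' := rfl
        map_mul' := fun _ _ => rfl }
    have hι : Function.Injective ι := by
      intro a b h
      have h' : (ι a).val = (ι b).val := congrArg Subtype.val h
      exact Subtype.ext (Subtype.ext h')
    exact Subgroup.card_dvd_of_injective ι hι
  have hcop_qS : (Nat.card qS.ker).Coprime n := Nat.Coprime.coprime_dvd_left hkerdvd hcardKn
  have hqmax : Nat.card qS.ker ≤ m₁ := hmax₁ ↥S qS hstemqS hcop_qS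
  -- surjectivity of r₁ and r₂
  have hmapcomm₁ : (commutator ↥P).map p₁ = commutator T₁ := by
    rw [commutator_def ↥P, Subgroup.map_commutator,
      Subgroup.map_top_of_surjective p₁ hp₁surj, commutator_def]
  have hmapcomm₂ : (commutator ↥P).map p₂ = commutator T₂ := by
    rw [commutator_def ↥P, Subgroup.map_commutator,
      Subgroup.map_top_of_surjective p₂ hp₂surj, commutator_def]
  have hker_le_range₁ : π₁.ker ≤ r₁.range := by
    calc π₁.ker ≤ commutator T₁ := hd₁
      _ = (commutator ↥P).map p₁ := hmapcomm₁.symm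
      _ = ((commutator ↥S).map S.subtype).map p₁ := by rw [← hcommPS]
      _ = (commutator ↥S).map r₁ := by rw [Subgroup.map_map, ← hr₁def]
      _ ≤ r₁.range := Subgroup.map_le_range r₁ _
  have hker_le_range₂ : π₂.ker ≤ r₂.range := by
    calc π₂.ker ≤ commutator T₂ := hd₂
      _ = (commutator ↥P).map p₂ := hmapcomm₂.symm
      _ = ((commutator ↥S).map S.subtype).map p₂ := by rw [← hcommPS]
      _ = (commutator ↥S).map r₂ := by rw [Subgroup.map_map, ← hr₂def]
      _ ≤ r₂.range := Subgroup.map_le_range r₂ _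
  have hr₁surj : Function.Surjective r₁ := by
    rw [← MonoidHom.range_eq_top, eq_top_iff]
    intro t _
    obtain ⟨p, hp⟩ := hp₁surj t
    obtain ⟨k, hk, s, hsS, rfl⟩ := hdecomp p
    have h1 : p₁ k ∈ π₁.ker := hk
    have h2 : p₁ s ∈ r₁.range := ⟨⟨s, hsS⟩, rfl⟩
    have ht : t = p₁ k * p₁ s := by rw [← hp, map_mul]
    rw [ht]
    exact Subgroup.mul_mem _ (hker_le_range₁ h1) h2
  have hr₂surj : Function.Surjective r₂ := by
    rw [← MonoidHom.range_eq_top, eq_top_iff]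
    intro t _
    obtain ⟨p, hp⟩ := hp₂surj t
    obtain ⟨k, hk, s, hsS, rfl⟩ := hdecomp p
    have h1 : p₂ k ∈ π₂.ker := hmemK₂ k hk
    have h2 : p₂ s ∈ r₂.range := ⟨⟨s, hsS⟩, rfl⟩
    have ht : t = p₂ k * p₂ s := by rw [← hp, map_mul]
    rw [ht]
    exact Subgroup.mul_mem _ (hker_le_range₂ h1) h2
  -- counting
  have hGpos : 0 < Nat.card G := Nat.card_pos
  have hcardS₁ : Nat.card ↥S = Nat.card G * Nat.card qS.ker := by
    rw [Subgroup.card_eq_card_quotient_mul_card_subgroup qS.ker,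
      Nat.card_congr (QuotientGroup.quotientKerEquivOfSurjective qS hqSsurj).toEquiv]
  have hcardS₂ : Nat.card ↥S = Nat.card T₁ * Nat.card r₁.ker := by
    rw [Subgroup.card_eq_card_quotient_mul_card_subgroup r₁.ker,
      Nat.card_congr (QuotientGroup.quotientKerEquivOfSurjective r₁ hr₁surj).toEquiv]
  have hcardS₃ : Nat.card ↥S = Nat.card T₂ * Nat.card r₂.ker := by
    rw [Subgroup.card_eq_card_quotient_mul_card_subgroup r₂.ker,
      Nat.card_congr (QuotientGroup.quotientKerEquivOfSurjective r₂ hr₂surj).toEquiv]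
  have heq₁ : Nat.card qS.ker = m₁ * Nat.card r₁.ker := by
    have h := hcardS₁.symm.trans hcardS₂
    rw [hcardT₁] at h
    apply Nat.eq_of_mul_eq_mul_left hGpos
    rw [h, mul_assoc]
  have heq₂ : Nat.card qS.ker = m₂ * Nat.card r₂.ker := by
    have h := hcardS₁.symm.trans hcardS₃
    rw [hcardT₂] at h
    apply Nat.eq_of_mul_eq_mul_left hGpos
    rw [h, mul_assoc]
  haveI : Nonempty ↥r₁.ker := ⟨1⟩
  haveI : Nonempty ↥r₂.ker := ⟨1⟩
  have hk₁pos : 0 < Nat.card r₁.ker := Nat.card_pos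
  have hk₂pos : 0 < Nat.card r₂.ker := Nat.card_pos
  have hcard₁ : Nat.card r₁.ker = 1 := by
    have h2 : m₁ * Nat.card r₁.ker ≤ m₁ * 1 := by
      rw [mul_one, ← heq₁]; exact hqmax
    have h3 : Nat.card r₁.ker ≤ 1 := Nat.le_of_mul_le_mul_left h2 hm₁pos
    omega
  have hcard₂ : Nat.card r₂.ker = 1 := by
    have h2 : m₂ * Nat.card r₂.ker ≤ m₂ * 1 := by
      rw [mul_one, ← heq₂, hm12] at *
      exact hqmax
    have h3 : Nat.card r₂.ker ≤ 1 := Nat.le_of_mul_le_mul_left h2 hm₂pos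
    omega
  have hr₁inj : Function.Injective r₁ := by
    rw [← MonoidHom.ker_eq_bot_iff]
    exact Subgroup.card_eq_one.mp hcard₁
  have hr₂inj : Function.Injective r₂ := by
    rw [← MonoidHom.ker_eq_bot_iff]
    exact Subgroup.card_eq_one.mp hcard₂
  -- assemble the isomorphism
  let e₁ := MulEquiv.ofBijective r₁ ⟨hr₁inj, hr₁surj⟩
  let e₂ := MulEquiv.ofBijective r₂ ⟨hr₂inj, hr₂surj⟩
  refine ⟨e₁.symm.trans e₂, ?_⟩
  intro x
  show π₂ (e₂ (e₁.symm x)) = π₁ x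
  have hx : r₁ (e₁.symm x) = x := e₁.apply_symm_apply x
  have h5 : π₂ (r₂ (e₁.symm x)) = π₁ (r₁ (e₁.symm x)) :=
    (((e₁.symm x : ↥S) : ↥P).2).symm
  calc π₂ (e₂ (e₁.symm x)) = π₂ (r₂ (e₁.symm x)) := rfl
    _ = π₁ (r₁ (e₁.symm x)) := h5
    _ = π₁ x := by rw [hx]
end

section
/- Let Γ be a finite group acting by automorphisms on a finite group H with gcd(|H|, |Γ|) = 1, and assume H is admissible, i.e., H is generated by the set {h⁻¹·(γ•h) : h ∈ H, γ ∈ Γ}. Let π : G̃ → H ⋊ Γ be a stem extension (a surjection with ker π contained in the center and in the commutator subgroup of G̃) such that |ker π| is coprime to |Γ|, and set H̃ := π⁻¹(H), the preimage of the subgroup H of H ⋊ Γ. Then ker π is contained in the commutator subgroup of H̃; in other words, the restriction H̃ → H of π is again a stem extension. -/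
open Subgroup commutatorElement

private lemma eq_one_of_orderOf_dvd_coprime {G : Type*} [Group G] {x : G} {a b : ℕ}
    (ha : orderOf x ∣ a) (hb : orderOf x ∣ b) (h : Nat.Coprime a b) : x = 1 := by
  have hd : orderOf x ∣ Nat.gcd a b := Nat.dvd_gcd ha hb
  rw [Nat.Coprime] at h
  rw [h, Nat.dvd_one, orderOf_eq_one_iff] at hd
  exact hd

private lemma stmt7_stepA {G : Type*} [Group G] [Finite G] (N : Subgroup G) [N.Normal]
    {x : G} (hx : x ∈ commutator G) (hcop : Nat.Coprime (orderOf x) N.index) :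
    x ∈ ⁅N, (⊤ : Subgroup G)⁆ := by
  set L : Subgroup G := ⁅N, (⊤ : Subgroup G)⁆ with hL
  haveI : L.Normal := Subgroup.commutator_normal N ⊤
  set mk : G →* G ⧸ L := QuotientGroup.mk' L with hmk
  have hNc : N.map mk ≤ Subgroup.center (G ⧸ L) := by
    rintro _ ⟨n, hn, rfl⟩
    rw [Subgroup.mem_center_iff]
    intro q
    obtain ⟨g, rfl⟩ := QuotientGroup.mk'_surjective L q
    have h1 : mk ⁅n, g⁆ = 1 := by
      rw [hmk, QuotientGroup.mk'_apply, QuotientGroup.eq_one_iff]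
      exact Subgroup.commutator_mem_commutator hn (Subgroup.mem_top g)
    rw [map_commutatorElement] at h1
    exact (commutatorElement_eq_one_iff_commute.mp h1).symm.eq
  have hxQ : mk x ∈ commutator (G ⧸ L) := by
    have h2 : mk x ∈ Subgroup.map mk (commutator G) := Subgroup.mem_map_of_mem mk hx
    rw [_root_.commutator_def, Subgroup.map_commutator] at h2
    exact Subgroup.commutator_mono le_top le_top h2
  have hker : mk x ∈ (MonoidHom.transferCenterPow (G ⧸ L)).ker :=
    by
      have hle : commutator (G ⧸ L) ≤ (MonoidHom.transferCenterPow (G ⧸ L)).ker := by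
        rw [commutator_eq_closure, Subgroup.closure_le]
        rintro _ ⟨p, q, rfl⟩
        rw [SetLike.mem_coe, MonoidHom.mem_ker, map_commutatorElement,
          commutatorElement_eq_one_iff_commute]
        exact Subtype.ext (Subgroup.mem_center_iff.mp (MonoidHom.transferCenterPow (G ⧸ L) q).2 _)
      exact hle hxQ
  have h1 : (mk x) ^ (Subgroup.center (G ⧸ L)).index = 1 := by
    have h3 := MonoidHom.transferCenterPow_apply (G := G ⧸ L) (mk x)
    rw [MonoidHom.mem_ker.mp hker] at h3
    exact h3.symm
  have hdvd1 : orderOf (mk x) ∣ N.index := by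
    refine (orderOf_dvd_of_pow_eq_one h1).trans ?_
    exact (Subgroup.index_dvd_of_le hNc).trans (N.index_map_dvd (QuotientGroup.mk'_surjective L))
  have hdvd2 : orderOf (mk x) ∣ orderOf x := orderOf_map_dvd mk x
  have : mk x = 1 :=
    eq_one_of_orderOf_dvd_coprime hdvd2 hdvd1 hcop
  rwa [hmk, QuotientGroup.mk'_apply, QuotientGroup.eq_one_iff] at this


private lemma stmt7_stepB {G : Type*} [Group G] [Finite G] (N : Subgroup G) [N.Normal]
    {x : G} (hxN : x ∈ N) (hxL : x ∈ ⁅N, (⊤ : Subgroup G)⁆)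
    (hxc : x ∈ Subgroup.center G)
    (hcop : Nat.Coprime (orderOf x) N.index) :
    x ∈ ⁅N, N⁆ := by
  classical
  haveI : Fintype (G ⧸ N) := Fintype.ofFinite _
  -- conjugation action on the abelianization of N
  set c : G → (Abelianization ↥N →* Abelianization ↥N) :=
    fun g => Abelianization.map (MulAut.conjNormal g).toMonoidHom with hc
  have hcof : ∀ (g : G) (y : ↥N), c g (Abelianization.of y) =
      Abelianization.of (MulAut.conjNormal g y) := fun g y => Abelianization.map_of _ _
  have hcmul : ∀ (g h : G) (a : Abelianization ↥N), c (g * h) a = c g (c h a) := by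
    intro g h a
    induction a using Quotient.inductionOn with
    | h y =>
      show c (g * h) (Abelianization.of y) = c g (c h (Abelianization.of y))
      rw [hcof, hcof, hcof, map_mul]
      rfl
  have hcN : ∀ (g : G), g ∈ N → ∀ a, c g a = a := by
    intro g hg a
    induction a using Quotient.inductionOn with
    | h y =>
      show c g (Abelianization.of y) = Abelianization.of y
      rw [hcof]
      have hy : MulAut.conjNormal g y = ⟨g, hg⟩ * y * ⟨g, hg⟩⁻¹ := by
        ext
        simp [MulAut.conjNormal_apply]
      rw [hy, map_mul, map_mul, map_inv, mul_comm, inv_mul_cancel_left]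
  have hcoset : ∀ (g₁ g₂ : G), (g₁ : G ⧸ N) = (g₂ : G ⧸ N) → ∀ a, c g₁ a = c g₂ a := by
    intro g₁ g₂ h a
    have hmem : g₁⁻¹ * g₂ ∈ N := QuotientGroup.eq.mp h
    have h2 := hcmul g₁ (g₁⁻¹ * g₂) a
    rw [mul_inv_cancel_left, hcN _ hmem] at h2
    exact h2.symm
  -- the averaging function
  set P : Abelianization ↥N → Abelianization ↥N :=
    fun a => ∏ q : G ⧸ N, c (Quotient.out q) a with hP
  have hPmul : ∀ a b, P (a * b) = P a * P b := by
    intro a b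
    show (∏ q : G ⧸ N, c (Quotient.out q) (a * b)) = _
    simp only [map_mul]
    exact Finset.prod_mul_distrib
  have hPinv : ∀ a, P a⁻¹ = (P a)⁻¹ := by
    intro a
    show (∏ q : G ⧸ N, c (Quotient.out q) a⁻¹) = _
    simp only [map_inv]
    exact Finset.prod_inv_distrib _
  have hPequi : ∀ (g : G) (a : Abelianization ↥N), P (c g a) = P a := by
    intro g a
    show (∏ q : G ⧸ N, c (Quotient.out q) (c g a)) = ∏ q : G ⧸ N, c (Quotient.out q) a
    have step : ∀ q : G ⧸ N, c (Quotient.out q) (c g a)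
        = c (Quotient.out (q * (g : G ⧸ N))) a := by
      intro q
      rw [← hcmul]
      apply hcoset
      have h1 : ((Quotient.out q * g : G) : G ⧸ N) = q * (g : G ⧸ N) := by
        rw [QuotientGroup.mk_mul, QuotientGroup.out_eq']
      have h2 : ((Quotient.out (q * (g : G ⧸ N)) : G) : G ⧸ N) = q * (g : G ⧸ N) :=
        QuotientGroup.out_eq' _
      rw [h1, h2]
    simp only [step]
    exact Equiv.prod_comp (Equiv.mulRight ((g : G ⧸ N))) (fun q => c (Quotient.out q) a)
  -- P as a hom on N
  set ψ : ↥N →* Abelianization ↥N :=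
    { toFun := fun y => P (Abelianization.of y)
      map_one' := by
        show P (Abelianization.of 1) = 1
        rw [map_one]
        show (∏ q : G ⧸ N, c (Quotient.out q) 1) = 1
        simp
      map_mul' := by
        intro y z
        show P (Abelianization.of (y * z)) = P (Abelianization.of y) * P (Abelianization.of z)
        rw [map_mul]
        exact hPmul _ _ } with hψ
  set T : Subgroup G := ψ.ker.map N.subtype with hT
  have hLT : ⁅N, (⊤ : Subgroup G)⁆ ≤ T := by
    rw [Subgroup.commutator_le]
    intro n hn g _
    have hmemN : ⁅n, g⁆ ∈ N := by
      have he : ⁅n, g⁆ = n * (g * n⁻¹ * g⁻¹) := by group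
      rw [he]
      exact N.mul_mem hn (Subgroup.Normal.conj_mem ‹N.Normal› n⁻¹ (N.inv_mem hn) g)
    refine ⟨⟨⁅n, g⁆, hmemN⟩, ?_, rfl⟩
    show ψ ⟨⁅n, g⁆, hmemN⟩ = 1
    have hsplit : (⟨⁅n, g⁆, hmemN⟩ : ↥N) = ⟨n, hn⟩ * MulAut.conjNormal g (⟨n, hn⟩⁻¹) := by
      ext
      simp only [Subgroup.coe_mul, MulAut.conjNormal_apply, InvMemClass.coe_inv]
      group
    rw [hsplit, map_mul]
    show P (Abelianization.of ⟨n, hn⟩) *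
        P (Abelianization.of (MulAut.conjNormal g (⟨n, hn⟩⁻¹))) = 1
    rw [← hcof, hPequi, map_inv, hPinv, mul_inv_cancel]
  -- conclude
  obtain ⟨⟨x', hx'N⟩, hxker, hxval⟩ := hLT hxL
  have hxx : x' = x := hxval
  subst hxx
  have hP1 : P (Abelianization.of ⟨x', hx'N⟩) = 1 := hxker
  have hPx : P (Abelianization.of ⟨x', hx'N⟩)
      = (Abelianization.of (⟨x', hx'N⟩ : ↥N)) ^ N.index := by
    show (∏ q : G ⧸ N, c (Quotient.out q) (Abelianization.of ⟨x', hx'N⟩)) = _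
    have hfix : ∀ q : G ⧸ N, c (Quotient.out q) (Abelianization.of ⟨x', hx'N⟩)
        = Abelianization.of (⟨x', hx'N⟩ : ↥N) := by
      intro q
      rw [hcof]
      congr 1
      ext
      show Quotient.out q * x' * (Quotient.out q)⁻¹ = x'
      have hcomm := Subgroup.mem_center_iff.mp hxc (Quotient.out q)
      rw [hcomm, mul_inv_cancel_right]
    simp only [hfix, Finset.prod_const, Finset.card_univ]
    rw [Subgroup.index, Nat.card_eq_fintype_card]
  have hord1 : orderOf (Abelianization.of (⟨x', hx'N⟩ : ↥N)) ∣ N.index :=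
    orderOf_dvd_of_pow_eq_one (by rw [← hPx, hP1])
  have hord2 : orderOf (Abelianization.of (⟨x', hx'N⟩ : ↥N)) ∣ orderOf x' := by
    refine (orderOf_map_dvd _ _).trans ?_
    rw [Subgroup.orderOf_mk]
  have h1 : Abelianization.of (⟨x', hx'N⟩ : ↥N) = 1 :=
    eq_one_of_orderOf_dvd_coprime hord2 hord1 hcop
  have hmem : (⟨x', hx'N⟩ : ↥N) ∈ commutator ↥N := by
    rw [← QuotientGroup.eq_one_iff]
    exact h1
  have hfin : x' ∈ (commutator ↥N).map N.subtype := ⟨_, hmem, rfl⟩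
  rwa [_root_.commutator_def, Subgroup.map_commutator, ← MonoidHom.range_eq_map,
    Subgroup.range_subtype] at hfin

/-- Let `Γ` be a finite group acting on a finite group `H` with
`gcd(|H|, |Γ|) = 1`, and assume `H` is admissible, i.e. generated by the elements
`h⁻¹·(γ•h)`.  Let `π : G̃ → H ⋊ Γ` be a stem extension with `|ker π|` coprime to `|Γ|`
and set `H̃ := π⁻¹(H)`, the preimage of the canonical copy of `H` in `H ⋊ Γ`.  Then
`ker π` is contained in the commutator subgroup of `H̃`; in other words the restriction
`H̃ → H` of `π` is again a stem extension. -/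
theorem stmt7 {Γ H G' : Type*} [Group Γ] [Fintype Γ] [Group H] [Fintype H] [Group G']
    (b : Γ →* MulAut H)
    (hcop : Nat.Coprime (Fintype.card H) (Fintype.card Γ))
    (hadm : Subgroup.closure {x : H | ∃ (h : H) (γ : Γ), x = h⁻¹ * b γ h} = ⊤)
    (π : G' →* H ⋊[b] Γ) (hsurj : Function.Surjective π)
    (hcenter : π.ker ≤ Subgroup.center G')
    (hcomm : π.ker ≤ commutator G')
    (hkcop : Nat.Coprime (Nat.card π.ker) (Fintype.card Γ)) :
    π.ker ≤
      ⁅(SemidirectProduct.inl : H →* H ⋊[b] Γ).range.comap π,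
        (SemidirectProduct.inl : H →* H ⋊[b] Γ).range.comap π⁆ := by
  intro x hx
  by_cases hΓ : Fintype.card Γ = 1
  · -- `Γ` is trivial, so the preimage of `H` is everything and the claim is `hcomm`.
    haveI : Subsingleton Γ := Fintype.card_le_one_iff_subsingleton.mp (le_of_eq hΓ)
    have htop : (SemidirectProduct.inl : H →* H ⋊[b] Γ).range.comap π = ⊤ := by
      rw [Subgroup.eq_top_iff']
      intro g
      rw [Subgroup.mem_comap]
      refine ⟨(π g).left, ?_⟩
      ext
      · simp
      · exact Subsingleton.elim _ _
    rw [htop]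
    exact hcomm hx
  · -- main case: everything is finite
    have hK0 : Nat.card π.ker ≠ 0 := by
      intro h0
      rw [h0] at hkcop
      exact hΓ ((Nat.coprime_zero_left _).mp hkcop)
    haveI hKfin : Finite π.ker := (Nat.card_ne_zero.mp hK0).2
    haveI : Finite (H ⋊[b] Γ) :=
      Finite.of_equiv (H × Γ)
        ⟨fun p => ⟨p.1, p.2⟩, fun s => (s.left, s.right), fun p => rfl, fun s => rfl⟩
    haveI : Finite (G' ⧸ π.ker) :=
      Finite.of_equiv _ (QuotientGroup.quotientKerEquivOfSurjective π hsurj).symm.toEquiv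
    haveI : Finite G' := Finite.of_equiv _ (Subgroup.groupEquivQuotientProdSubgroup (s := π.ker)).symm
    set N : Subgroup G' := (SemidirectProduct.inl : H →* H ⋊[b] Γ).range.comap π with hN
    haveI hNn : N.Normal := by
      rw [hN, SemidirectProduct.range_inl_eq_ker_rightHom, MonoidHom.comap_ker]
      exact MonoidHom.normal_ker _
    have hidx : N.index = Fintype.card Γ := by
      rw [hN, Subgroup.index_comap_of_surjective _ hsurj,
        SemidirectProduct.range_inl_eq_ker_rightHom, Subgroup.index_ker,
        MonoidHom.range_eq_top_of_surjective _ SemidirectProduct.rightHom_surjective,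
        Subgroup.card_top, Nat.card_eq_fintype_card]
    have hordx : orderOf x ∣ Nat.card π.ker := by
      have h1 : orderOf (⟨x, hx⟩ : π.ker) ∣ Nat.card π.ker := orderOf_dvd_natCard _
      rwa [Subgroup.orderOf_mk] at h1
    have hcopx : Nat.Coprime (orderOf x) N.index := by
      rw [hidx]
      exact Nat.Coprime.coprime_dvd_left hordx hkcop
    have hxN : x ∈ N := by
      have h1 : π x = 1 := hx
      rw [hN, Subgroup.mem_comap, h1]
      exact one_mem _
    exact stmt7_stepB N hxN (stmt7_stepA N (hcomm hx) hcopx) (hcenter hx) hcopx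
end

section
/- Let G be a group and σ an automorphism of G with σ ∘ σ = id. Suppose G is generated by the set {g⁻¹·σ(g) : g ∈ G}. Then the semidirect product G ⋊ ℤ/2ℤ, with the nontrivial element of ℤ/2ℤ acting by σ, is generated by its elements x satisfying x·x = 1. -/
/-- Let `G` be a group and `σ` an automorphism of `G` with
`σ ∘ σ = id`.  Suppose `G` is generated by the set `{g⁻¹·σ(g)}`.  Then the semidirect
product `G ⋊ ℤ/2ℤ`, with the nontrivial element of `ℤ/2ℤ` acting by `σ`, is generated
by its elements `x` satisfying `x·x = 1`. -/
theorem stmt12 {G : Type*} [Group G] (σ : MulAut G)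
    (hσ : σ * σ = 1)
    (hgen : Subgroup.closure {x : G | ∃ g : G, x = g⁻¹ * σ g} = ⊤)
    (φ : Multiplicative (ZMod 2) →* MulAut G)
    (hφ : φ (Multiplicative.ofAdd 1) = σ) :
    Subgroup.closure {x : G ⋊[φ] Multiplicative (ZMod 2) | x * x = 1} = ⊤ := by
  set S := {x : G ⋊[φ] Multiplicative (ZMod 2) | x * x = 1} with hS
  set s : Multiplicative (ZMod 2) := Multiplicative.ofAdd 1 with hs
  have hss : s * s = 1 := by decide
  have hts : ∀ t : Multiplicative (ZMod 2),
      (⟨1, t⟩ : G ⋊[φ] Multiplicative (ZMod 2)) ∈ Subgroup.closure S := by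
    intro t
    apply Subgroup.subset_closure
    show (⟨1, t⟩ : G ⋊[φ] _) * ⟨1, t⟩ = 1
    have htt : t * t = 1 := by revert t; decide
    ext
    · simp [SemidirectProduct.mul_left]
    · simp [SemidirectProduct.mul_right, htt]
  have hσσ : ∀ g : G, σ (σ g) = g := by
    intro g
    have := congrArg (fun f : MulAut G => f g) hσ
    simpa using this
  have hinl : ∀ g : G, (⟨g, 1⟩ : G ⋊[φ] Multiplicative (ZMod 2)) ∈ Subgroup.closure S := by
    intro g
    have hg : g ∈ Subgroup.closure {x : G | ∃ g : G, x = g⁻¹ * σ g} := by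
      rw [hgen]; trivial
    induction hg using Subgroup.closure_induction with
    | mem x hx =>
      obtain ⟨g, rfl⟩ := hx
      set h := g⁻¹ * σ g with hh
      have h1 : (⟨h, s⟩ : G ⋊[φ] Multiplicative (ZMod 2)) ∈ Subgroup.closure S := by
        apply Subgroup.subset_closure
        show (⟨h, s⟩ : G ⋊[φ] _) * ⟨h, s⟩ = 1
        ext
        · show h * φ s h = 1
          rw [hφ, hh]
          simp [mul_assoc, hσσ]
        · exact hss
      have h2 := hts s
      have := Subgroup.mul_mem _ h1 h2
      convert this using 1
      ext
      · show h = h * φ s 1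
        simp
      · show (1 : Multiplicative (ZMod 2)) = s * s
        exact hss.symm
    | one =>
      convert Subgroup.one_mem (Subgroup.closure S) using 1
      rfl
    | mul x y _ _ hx hy =>
      have := Subgroup.mul_mem _ hx hy
      convert this using 1
      ext
      · show x * y = x * φ 1 y
        simp
      · simp
    | inv x _ hx =>
      have := Subgroup.inv_mem _ hx
      convert this using 1
      ext
      · show x⁻¹ = φ (1 : Multiplicative (ZMod 2))⁻¹ x⁻¹
        simp
      · simp
  rw [eq_top_iff]
  intro x _
  have : x = (⟨x.left, 1⟩ : G ⋊[φ] Multiplicative (ZMod 2)) * ⟨1, x.right⟩ := by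
    ext
    · show x.left = x.left * φ 1 1
      simp
    · show x.right = 1 * x.right
      simp
  rw [this]
  exact Subgroup.mul_mem _ (hinl x.left) (hts x.right)
end

section
/- Let Γ be a finite group acting by automorphisms on a finite group H with gcd(|H|, |Γ|) = 1, and let p : H ⋊ Γ → Γ be the canonical projection. Let γ ∈ Γ and let x, y ∈ H ⋊ Γ satisfy p(x) = p(y) = γ and ord(x) = ord(y) = ord(γ). Then x and y are conjugate in H ⋊ Γ. -/
open Subgroup
open scoped Pointwise

universe u v

private lemma aux_ord {G : Type*} [Group G] {z : G} {n n1 n2 e : ℕ}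
    (hz : orderOf z = n) (hmul : n = n1 * n2) (h1 : e ≡ 1 [MOD n1]) (h2 : e ≡ 0 [MOD n2]) :
    orderOf (z ^ e) = n1 := by
  have hcop : Nat.Coprime n1 e := by
    have := h1.gcd_eq
    simpa [Nat.Coprime, Nat.gcd_comm] using this
  have hd1 : orderOf (z ^ e) ∣ n1 := by
    apply orderOf_dvd_of_pow_eq_one
    rw [← pow_mul, ← orderOf_dvd_iff_pow_eq_one, hz, hmul]
    have : n2 ∣ e := (Nat.modEq_zero_iff_dvd).mp h2
    calc n1 * n2 ∣ n2 * n1 := by rw [mul_comm]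
    _ ∣ e * n1 := mul_dvd_mul this (dvd_refl n1)
  have hd2 : n1 ∣ orderOf (z ^ e) := by
    have h : z ^ (e * orderOf (z ^ e)) = 1 := by
      rw [pow_mul]; exact pow_orderOf_eq_one _
    have hdvd : n ∣ e * orderOf (z ^ e) := hz ▸ orderOf_dvd_of_pow_eq_one h
    have : n1 ∣ e * orderOf (z ^ e) := dvd_trans ⟨n2, by rw [hmul, mul_comm]⟩ hdvd
    exact hcop.dvd_of_dvd_mul_left this
  exact Nat.dvd_antisymm hd1 hd2

private theorem key_conj : ∀ (n : ℕ) {G : Type u} {K : Type v} [Group G] [Group K]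
    [Fintype G] [Fintype K] (f : G →* K),
    Nat.Coprime (Nat.card f.ker) (Nat.card K) →
    ∀ x y : G, orderOf x = n → f x = f y → orderOf x = orderOf (f x) →
    orderOf y = orderOf (f y) →
    ∃ g ∈ f.ker, g * x * g⁻¹ = y := by
  intro n
  induction n using Nat.strong_induction_on with
  | _ n IH =>
  intro G K _ _ _ _ f hcop x y hn hxy hox hoy
  have hn0 : n ≠ 0 := by rw [← hn]; exact (orderOf_pos x).ne'
  by_cases hn1 : n = 1
  · subst hn1
    have hx1 : x = 1 := orderOf_eq_one_iff.mp hn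
    have hy1 : y = 1 := orderOf_eq_one_iff.mp (by rw [hoy, ← hxy, ← hox, hn])
    exact ⟨1, one_mem _, by simp [hx1, hy1]⟩
  set p := n.minFac with hp_def
  have hp : p.Prime := Nat.minFac_prime hn1
  haveI : Fact p.Prime := ⟨hp⟩
  set k := n.factorization p with hk_def
  set n1 := p ^ k with hn1_def
  set n2 := ordCompl[p] n with hn2_def
  have hsplit : n1 * n2 = n := Nat.ordProj_mul_ordCompl_eq_self n p
  have hcop12 : Nat.Coprime n1 n2 := Nat.Coprime.pow_left _ (Nat.coprime_ordCompl hp hn0)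
  have hkpos : 0 < k := by
    rw [hk_def]
    exact (Nat.Prime.factorization_pos_of_dvd hp hn0 (Nat.minFac_dvd n))
  have h2n1 : 2 ≤ n1 := le_trans hp.two_le (Nat.le_self_pow hkpos.ne' p)
  have hordy : orderOf y = n := by rw [hoy, ← hxy, ← hox, hn]
  have hofx : orderOf (f x) = n := by rw [← hox, hn]
  have hofy : orderOf (f y) = n := by rw [← hoy, hordy]
  have hpK : p ∣ Nat.card K := by
    refine dvd_trans ?_ (orderOf_dvd_natCard (f x))
    rw [hofx]; exact n.minFac_dvd
  have hpker : ¬ p ∣ Nat.card f.ker := fun hd =>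
    Nat.Prime.not_dvd_one hp (hcop ▸ Nat.dvd_gcd hd hpK)
  by_cases hn2 : n2 = 1
  · -- prime power case, via Sylow
    have hnpk : n = p ^ k := by rw [← hsplit, hn2, mul_one]
    set Γ1 := Subgroup.zpowers (f x) with hΓ1
    set G1 := Γ1.comap f with hG1
    have hxm : x ∈ G1 := mem_comap.mpr (mem_zpowers _)
    have hym : y ∈ G1 := mem_comap.mpr (hxy ▸ mem_zpowers (f x))
    set x1 : G1 := ⟨x, hxm⟩ with hx1_def
    set y1 : G1 := ⟨y, hym⟩ with hy1_def
    have hox1 : orderOf x1 = n := by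
      rw [← hn]; exact (orderOf_injective G1.subtype G1.subtype_injective x1).symm
    have hoy1 : orderOf y1 = n := by
      rw [← hordy]; exact (orderOf_injective G1.subtype G1.subtype_injective y1).symm
    set f1 : G1 →* Γ1 := (f.comp G1.subtype).codRestrict Γ1 (fun z => z.2) with hf1
    have hf1surj : Function.Surjective f1 := by
      rintro ⟨w, j, rfl⟩
      refine ⟨⟨x, hxm⟩ ^ j, ?_⟩
      ext
      simp [f1]
      rfl
    have hcardG1 : Nat.card G1 = Nat.card f1.ker * Nat.card Γ1 := by
      have h1 : Nat.card G1 = Nat.card (G1 ⧸ f1.ker) * Nat.card f1.ker :=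
        card_eq_card_quotient_mul_card_subgroup f1.ker
      have h2 : Nat.card (G1 ⧸ f1.ker) = Nat.card Γ1 :=
        Nat.card_congr (QuotientGroup.quotientKerEquivOfSurjective f1 hf1surj).toEquiv
      rw [h1, h2, mul_comm]
    have hkm : ∀ z : f1.ker, ((z : G1) : G) ∈ f.ker := by
      rintro ⟨z, hz⟩
      have h1 : f1 z = 1 := hz
      have h2 : ((f1 z : Γ1) : K) = 1 := by rw [h1]; rfl
      exact MonoidHom.mem_ker.mpr h2
    have hker1dvd : Nat.card f1.ker ∣ Nat.card f.ker := by
      refine Subgroup.card_dvd_of_injective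
        ({ toFun := fun z => (⟨((z : G1) : G), hkm z⟩ : f.ker),
           map_one' := rfl,
           map_mul' := fun a b => rfl } : f1.ker →* f.ker) ?_
      intro a b hab
      have h := congrArg Subtype.val hab
      exact Subtype.ext (Subtype.ext h)
    have hΓ1card : Nat.card Γ1 = p ^ k := by
      rw [hΓ1, Nat.card_zpowers, hofx, hnpk]
    have hsylow : ∀ z1 : G1, orderOf z1 = n → ∀ P : Sylow p G1, zpowers z1 ≤ ↑P →
        zpowers z1 = ↑P := by
      intro z1 hz1 P hle
      obtain ⟨m, hm⟩ := P.isPGroup'.exists_card_eq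
      refine Subgroup.eq_of_le_of_card_ge hle ?_
      have hPd : Nat.card (P : Subgroup G1) ∣ Nat.card G1 :=
        card_subgroup_dvd_card (P : Subgroup G1)
      rw [hcardG1, hΓ1card, hm] at hPd
      have hcpm : Nat.Coprime (p ^ m) (Nat.card f1.ker) :=
        Nat.Coprime.pow_left _ ((Nat.Prime.coprime_iff_not_dvd hp).mpr
          (fun h => hpker (h.trans hker1dvd)))
      have hdk : (p ^ m : ℕ) ∣ p ^ k := hcpm.dvd_of_dvd_mul_left hPd
      rw [hm, Nat.card_zpowers, hz1, hnpk]
      exact Nat.le_of_dvd (pow_pos hp.pos k) hdk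
    obtain ⟨Px, hPx⟩ :=
      (IsPGroup.of_card (p := p) (n := k)
        (by rw [Nat.card_zpowers, hox1, hnpk]) : IsPGroup p (zpowers x1)).exists_le_sylow
    obtain ⟨Py, hPy⟩ :=
      (IsPGroup.of_card (p := p) (n := k)
        (by rw [Nat.card_zpowers, hoy1, hnpk]) : IsPGroup p (zpowers y1)).exists_le_sylow
    have hx1P : zpowers x1 = ↑Px := hsylow x1 hox1 Px hPx
    have hy1P : zpowers y1 = ↑Py := hsylow y1 hoy1 Py hPy
    obtain ⟨g, hg⟩ := MulAction.exists_smul_eq G1 Px Py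
    have hsub : MulAut.conj g • (Px : Subgroup G1) = (Py : Subgroup G1) := by
      rw [← Sylow.pointwise_smul_def, ← Sylow.smul_def, hg]
    have hmem : g * x1 * g⁻¹ ∈ (Py : Subgroup G1) := by
      rw [← hsub]
      have := Subgroup.smul_mem_pointwise_smul x1 (MulAut.conj g) (Px : Subgroup G1)
        (hPx (mem_zpowers x1))
      simpa [MulAut.smul_def] using this
    rw [← hy1P] at hmem
    obtain ⟨j, hj⟩ := mem_zpowers_iff.mp hmem
    have hjG : (↑g : G) * x * (↑g : G)⁻¹ = y ^ j := by
      have := congrArg (Subtype.val) hj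
      simpa using this.symm
    obtain ⟨i, hi⟩ := g.2
    have hfconj : f ((↑g : G) * x * (↑g : G)⁻¹) = f x := by
      rw [map_mul, map_mul, map_inv, ← hi]
      exact mul_inv_eq_iff_eq_mul.mpr ((Commute.refl (f x)).zpow_left i)
    have hyj : y ^ j = y := by
      have h1 : (f y) ^ j = f y := by
        rw [← map_zpow, ← hjG, hfconj, hxy]
      have h2 : (f y) ^ (j - 1) = 1 := by
        rw [zpow_sub, zpow_one, h1, mul_inv_cancel]
      have h3 : ((orderOf y : ℤ)) ∣ (j - 1) := by
        rw [hoy]; exact orderOf_dvd_iff_zpow_eq_one.mpr h2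
      have h4 : y ^ (j - 1) = 1 := orderOf_dvd_iff_zpow_eq_one.mp h3
      calc y ^ j = y ^ (j - 1) * y ^ (1 : ℤ) := by rw [← zpow_add]; ring_nf
      _ = y := by rw [h4, one_mul, zpow_one]
    have hconj : (↑g : G) * x * (↑g : G)⁻¹ = y := by rw [hjG, hyj]
    refine ⟨y ^ (-i) * ↑g, ?_, ?_⟩
    · apply MonoidHom.mem_ker.mpr
      rw [map_mul, map_zpow, ← hi, ← hxy]
      group
    · calc y ^ (-i) * ↑g * x * (y ^ (-i) * ↑g)⁻¹
          = y ^ (-i) * ((↑g : G) * x * (↑g : G)⁻¹) * y ^ i := by group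
      _ = y ^ (-i) * y * y ^ i := by rw [hconj]
      _ = y := by group
  · -- composite case
    have hn2pos : 0 < n2 := Nat.ordCompl_pos p hn0
    have hn1ltn : n1 < n := by
      rw [← hsplit]
      exact lt_mul_iff_one_lt_right (by omega) |>.mpr (by omega)
    have hn2ltn : n2 < n := by
      rw [← hsplit]
      exact lt_mul_iff_one_lt_left hn2pos |>.mpr (by omega)
    obtain ⟨e1, he1₁, he1₂⟩ := Nat.chineseRemainder hcop12 1 0
    obtain ⟨e2, he2₁, he2₂⟩ := Nat.chineseRemainder hcop12 0 1
    have he : (e1 + e2) ≡ 1 [MOD n] := by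
      rw [← hsplit]
      exact (Nat.modEq_and_modEq_iff_modEq_mul hcop12).mp
        ⟨by simpa using he1₁.add he2₁, by simpa using he1₂.add he2₂⟩
    have hsplit2 : n = n2 * n1 := by rw [mul_comm, hsplit]
    have hxe : x ^ (e1 + e2) = x := by
      have := pow_eq_pow_iff_modEq.mpr (show e1 + e2 ≡ 1 [MOD orderOf x] by rw [hn]; exact he)
      simpa using this
    have hye : y ^ (e1 + e2) = y := by
      have := pow_eq_pow_iff_modEq.mpr
        (show e1 + e2 ≡ 1 [MOD orderOf y] by rw [hordy]; exact he)
      simpa using this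
    have hx1o : orderOf (x ^ e1) = n1 := aux_ord hn hsplit.symm he1₁ he1₂
    have hy1o : orderOf (y ^ e1) = n1 := aux_ord hordy hsplit.symm he1₁ he1₂
    have hfx1o : orderOf ((f x) ^ e1) = n1 := aux_ord hofx hsplit.symm he1₁ he1₂
    have hfy1o : orderOf ((f y) ^ e1) = n1 := aux_ord hofy hsplit.symm he1₁ he1₂
    obtain ⟨g, hgker, hgconj⟩ := IH n1 hn1ltn f hcop (x ^ e1) (y ^ e1) hx1o
      (by rw [map_pow, map_pow, hxy])
      (by rw [map_pow, hx1o, hfx1o])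
      (by rw [map_pow, hy1o, hfy1o])
    set x' := g * x * g⁻¹ with hx'
    have hsc : SemiconjBy g x x' := by
      unfold SemiconjBy; rw [hx']; group
    have hox' : orderOf x' = n := by rw [← hsc.orderOf_eq, hn]
    have hx'pow : ∀ m : ℕ, x' ^ m = g * x ^ m * g⁻¹ := by
      intro m
      rw [hx', conj_pow]
    have hx'e1 : x' ^ e1 = y ^ e1 := by rw [hx'pow, hgconj]
    have hfg : f g = 1 := MonoidHom.mem_ker.mp hgker
    have hfx' : f x' = f x := by
      rw [hx', map_mul, map_mul, map_inv, hfg]; group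
    set C := Subgroup.centralizer {y ^ e1} with hC
    have hcomm_x' : x' ^ e2 ∈ C := by
      rw [hC, mem_centralizer_iff]
      rintro h ⟨rfl⟩
      rw [← hx'e1]
      exact ((Commute.refl x').pow_pow e1 e2)
    have hcomm_y : y ^ e2 ∈ C := by
      rw [hC, mem_centralizer_iff]
      rintro h ⟨rfl⟩
      exact ((Commute.refl y).pow_pow e1 e2)
    set f' : C →* K := f.comp C.subtype with hf'
    have hkm' : ∀ z : f'.ker, ((z : C) : G) ∈ f.ker := by
      rintro ⟨z, hz⟩
      exact MonoidHom.mem_ker.mpr hz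
    have hkerCdvd : Nat.card f'.ker ∣ Nat.card f.ker := by
      refine Subgroup.card_dvd_of_injective
        ({ toFun := fun z => (⟨((z : C) : G), hkm' z⟩ : f.ker),
           map_one' := rfl,
           map_mul' := fun a b => rfl } : f'.ker →* f.ker) ?_
      intro a b hab
      have h := congrArg Subtype.val hab
      exact Subtype.ext (Subtype.ext h)
    have hcop' : Nat.Coprime (Nat.card f'.ker) (Nat.card K) :=
      Nat.Coprime.coprime_dvd_left hkerCdvd hcop
    set x2c : C := ⟨x' ^ e2, hcomm_x'⟩ with hx2c
    set y2c : C := ⟨y ^ e2, hcomm_y⟩ with hy2c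
    have hx2o : orderOf x2c = n2 := by
      rw [show orderOf x2c = orderOf (x' ^ e2) from
        (orderOf_injective C.subtype C.subtype_injective x2c).symm]
      exact aux_ord hox' hsplit2 he2₂ he2₁
    have hy2o : orderOf y2c = n2 := by
      rw [show orderOf y2c = orderOf (y ^ e2) from
        (orderOf_injective C.subtype C.subtype_injective y2c).symm]
      exact aux_ord hordy hsplit2 he2₂ he2₁
    have hfx2 : f' x2c = (f x) ^ e2 := by
      show f (x' ^ e2) = (f x) ^ e2
      rw [map_pow, hfx']
    have hfy2 : f' y2c = (f y) ^ e2 := by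
      show f (y ^ e2) = (f y) ^ e2
      rw [map_pow]
    have hfx2o : orderOf ((f x) ^ e2) = n2 := aux_ord hofx hsplit2 he2₂ he2₁
    have hfy2o : orderOf ((f y) ^ e2) = n2 := aux_ord hofy hsplit2 he2₂ he2₁
    haveI : Fintype C := Fintype.ofFinite _
    obtain ⟨c, hcker, hcconj⟩ := IH n2 hn2ltn f' hcop' x2c y2c hx2o
      (by rw [hfx2, hfy2, hxy])
      (by rw [hfx2, hx2o, hfx2o])
      (by rw [hfy2, hy2o, hfy2o])
    have hcx2 : (↑c : G) * (x' ^ e2) * (↑c : G)⁻¹ = y ^ e2 := by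
      simpa using congrArg Subtype.val hcconj
    have hcy1 : (↑c : G) * (y ^ e1) * (↑c : G)⁻¹ = y ^ e1 := by
      have h := (mem_centralizer_iff.mp c.2) (y ^ e1) rfl
      exact mul_inv_eq_iff_eq_mul.mpr h.symm
    have hfcg : (↑c : G) * g ∈ f.ker := by
      apply MonoidHom.mem_ker.mpr
      rw [map_mul, hfg, mul_one]
      exact MonoidHom.mem_ker.mp hcker
    refine ⟨(↑c : G) * g, hfcg, ?_⟩
    have hx'e : x' ^ (e1 + e2) = x' := by
      have := pow_eq_pow_iff_modEq.mpr
        (show e1 + e2 ≡ 1 [MOD orderOf x'] by rw [hox']; exact he)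
      simpa using this
    have hx'full : x' ^ e1 * x' ^ e2 = x' := by rw [← pow_add, hx'e]
    calc (↑c : G) * g * x * ((↑c : G) * g)⁻¹
        = ↑c * (g * x * g⁻¹) * (↑c : G)⁻¹ := by group
    _ = ↑c * (x' ^ e1 * x' ^ e2) * (↑c : G)⁻¹ := by rw [← hx', hx'full]
    _ = (↑c * x' ^ e1 * (↑c : G)⁻¹) * (↑c * x' ^ e2 * (↑c : G)⁻¹) := by group
    _ = y ^ e1 * y ^ e2 := by rw [hx'e1, hcx2, hcy1]
    _ = y := by rw [← pow_add, hye]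



/-- Let `Γ` be a finite group acting by automorphisms on a finite
group `H` with `gcd(|H|, |Γ|) = 1`, and let `p : H ⋊ Γ → Γ` be the canonical
projection.  If `x, y ∈ H ⋊ Γ` satisfy `p(x) = p(y) = γ` and
`ord(x) = ord(y) = ord(γ)`, then `x` and `y` are conjugate in `H ⋊ Γ`. -/
theorem stmt14 {Γ H : Type*} [Group Γ] [Fintype Γ] [Group H] [Fintype H]
    (b : Γ →* MulAut H)
    (hcop : Nat.Coprime (Fintype.card H) (Fintype.card Γ))
    (γ : Γ) (x y : H ⋊[b] Γ)
    (hx : SemidirectProduct.rightHom x = γ) (hy : SemidirectProduct.rightHom y = γ)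
    (hox : orderOf x = orderOf γ) (hoy : orderOf y = orderOf γ) :
    IsConj x y := by
  haveI : Fintype (H ⋊[b] Γ) := Fintype.ofEquiv (H × Γ)
    { toFun := fun p => ⟨p.1, p.2⟩
      invFun := fun s => (s.left, s.right)
      left_inv := fun p => rfl
      right_inv := fun s => rfl }
  have hker : Nat.card (SemidirectProduct.rightHom : H ⋊[b] Γ →* Γ).ker = Nat.card H := by
    rw [← SemidirectProduct.range_inl_eq_ker_rightHom]
    exact Nat.card_congr
      (MonoidHom.ofInjective SemidirectProduct.inl_injective).toEquiv.symm
  have hcop' : Nat.Coprime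
      (Nat.card (SemidirectProduct.rightHom : H ⋊[b] Γ →* Γ).ker) (Nat.card Γ) := by
    rw [hker, Nat.card_eq_fintype_card, Nat.card_eq_fintype_card]; exact hcop
  obtain ⟨g, -, hg⟩ := key_conj (orderOf x) SemidirectProduct.rightHom hcop' x y rfl
    (by rw [hx, hy]) (by rw [hx, hox]) (by rw [hy, hoy])
  exact isConj_iff.mpr ⟨g, hg⟩
end

section
/- Let F be the free group on generators x₁, …, x_m, let w = x₁⁻¹x₂⁻¹⋯x_m⁻¹·x₁x₂⋯x_m, let R be the normal closure of {w} in F, and let σ be the automorphism of F determined by σ(xᵢ) = xᵢ⁻¹ for all i (its square is the identity). Then σ(w) = (x₁x₂⋯x_m)·w·(x₁x₂⋯x_m)⁻¹; consequently σ(R) = R and σ(w)·w⁻¹ lies in the commutator subgroup ⁅F, R⁆, so the automorphism of F/⁅F, R⁆ induced by σ maps the image of R to itself and fixes the image of w. -/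
/-- The word `w = x₁⁻¹x₂⁻¹⋯x_m⁻¹·x₁x₂⋯x_m` in the free group on `m` generators. -/
def wrd (m : ℕ) : FreeGroup (Fin m) :=
  (List.ofFn fun i : Fin m => (FreeGroup.of i)⁻¹).prod *
    (List.ofFn fun i : Fin m => FreeGroup.of i).prod

/-- Let `F` be the free group on `x₁, …, x_m`, let
`w = x₁⁻¹⋯x_m⁻¹x₁⋯x_m`, `R` the normal closure of `{w}`, and `σ` the automorphism of
`F` with `σ(xᵢ) = xᵢ⁻¹`.  Then `σ(w) = (x₁⋯x_m)·w·(x₁⋯x_m)⁻¹`; consequently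
`σ(R) = R` and `σ(w)·w⁻¹ ∈ ⁅F, R⁆`, so the automorphism of `F/⁅F, R⁆` induced by `σ`
maps the image of `R` to itself and fixes the image of `w`. -/
theorem stmt17 {m : ℕ} (σ : MulAut (FreeGroup (Fin m)))
    (hσ : ∀ i : Fin m, σ (FreeGroup.of i) = (FreeGroup.of i)⁻¹) :
    σ (wrd m) =
        (List.ofFn fun i : Fin m => FreeGroup.of i).prod * wrd m *
          ((List.ofFn fun i : Fin m => FreeGroup.of i).prod)⁻¹ ∧
      (Subgroup.normalClosure {wrd m}).map σ.toMonoidHom = Subgroup.normalClosure {wrd m} ∧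
      σ (wrd m) * (wrd m)⁻¹ ∈
        ⁅(⊤ : Subgroup (FreeGroup (Fin m))), Subgroup.normalClosure {wrd m}⁆ ∧
      ∃ σ' : MulAut (FreeGroup (Fin m) ⧸
          ⁅(⊤ : Subgroup (FreeGroup (Fin m))), Subgroup.normalClosure {wrd m}⁆),
        (∀ g : FreeGroup (Fin m),
            σ' (QuotientGroup.mk g) = QuotientGroup.mk (σ g)) ∧
          ((Subgroup.normalClosure {wrd m}).map
              (QuotientGroup.mk'
                ⁅(⊤ : Subgroup (FreeGroup (Fin m))), Subgroup.normalClosure {wrd m}⁆)).map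
              σ'.toMonoidHom =
            (Subgroup.normalClosure {wrd m}).map
              (QuotientGroup.mk'
                ⁅(⊤ : Subgroup (FreeGroup (Fin m))), Subgroup.normalClosure {wrd m}⁆) ∧
          σ' (QuotientGroup.mk (wrd m)) = QuotientGroup.mk (wrd m) := by
  set s : FreeGroup (Fin m) := (List.ofFn fun i : Fin m => FreeGroup.of i).prod with hs
  set t : FreeGroup (Fin m) := (List.ofFn fun i : Fin m => (FreeGroup.of i)⁻¹).prod with ht
  have hσt : σ t = s := by
    rw [ht, map_list_prod, hs]
    congr 1
    rw [List.map_ofFn]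
    congr 1
    funext i
    simp [hσ i]
  have hσs : σ s = t := by
    rw [hs, map_list_prod, ht]
    congr 1
    rw [List.map_ofFn]
    congr 1
    funext i
    simp [hσ i]
  have hw : wrd m = t * s := rfl
  have h1 : σ (wrd m) = s * wrd m * s⁻¹ := by
    rw [hw, map_mul, hσt, hσs]; group
  set R := Subgroup.normalClosure {wrd m} with hR
  have hwR : wrd m ∈ R := Subgroup.subset_normalClosure rfl
  have hσwR : σ (wrd m) ∈ R := by
    rw [h1]; exact Subgroup.normalClosure_normal.conj_mem _ hwR s
  have h2 : R.map σ.toMonoidHom = R := by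
    rw [hR, Subgroup.map_normalClosure _ _ σ.surjective, Set.image_singleton]
    apply le_antisymm
    · exact Subgroup.normalClosure_le_normal (Set.singleton_subset_iff.mpr hσwR)
    · apply Subgroup.normalClosure_le_normal
      rw [Set.singleton_subset_iff]
      have h' : σ (wrd m) ∈ Subgroup.normalClosure {σ (wrd m)} :=
        Subgroup.subset_normalClosure rfl
      have hc := (Subgroup.normalClosure_normal).conj_mem _ h' s⁻¹
      have hw' : s⁻¹ * σ (wrd m) * (s⁻¹)⁻¹ = wrd m := by rw [h1]; group
      rwa [hw'] at hc
  set K := ⁅(⊤ : Subgroup (FreeGroup (Fin m))), R⁆ with hK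
  have h3 : σ (wrd m) * (wrd m)⁻¹ ∈ K := by
    open commutatorElement in
    have : σ (wrd m) * (wrd m)⁻¹ = ⁅s, wrd m⁆ := by
      rw [h1, commutatorElement_def]
    rw [this]
    exact Subgroup.commutator_mem_commutator (Subgroup.mem_top s) hwR
  have hKmap : K.map (σ : FreeGroup (Fin m) ≃* _) = K := by
    rw [hK, Subgroup.map_commutator, Subgroup.map_top_of_surjective _ σ.surjective]
    congr 1
  refine ⟨h1, h2, h3, QuotientGroup.congr K K (σ : FreeGroup (Fin m) ≃* _) hKmap, ?_, ?_, ?_⟩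
  · intro g; exact QuotientGroup.congr_mk K K _ hKmap g
  · ext x
    simp only [Subgroup.mem_map, QuotientGroup.mk'_apply]
    constructor
    · rintro ⟨-, ⟨y, hy, rfl⟩, rfl⟩
      refine ⟨σ y, ?_, (QuotientGroup.congr_mk K K _ hKmap y).symm⟩
      rw [← hR, ← h2]
      exact ⟨y, hy, rfl⟩
    · rintro ⟨y, hy, rfl⟩
      rw [← hR, ← h2] at hy
      obtain ⟨z, hz, rfl⟩ := hy
      exact ⟨QuotientGroup.mk z, ⟨z, hz, rfl⟩, QuotientGroup.congr_mk K K _ hKmap z⟩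
  · have hmk := QuotientGroup.congr_mk K K (σ : FreeGroup (Fin m) ≃* _) hKmap (wrd m)
    rw [hmk, QuotientGroup.eq]
    have hc := K.inv_mem ((Subgroup.commutator_normal ⊤ R).conj_mem _ h3 (wrd m)⁻¹)
    have heq : ((wrd m)⁻¹ * (σ (wrd m) * (wrd m)⁻¹) * ((wrd m)⁻¹)⁻¹)⁻¹ =
        (σ (wrd m))⁻¹ * wrd m := by group
    rwa [heq] at hc
end

section
/- Let Γ be a group acting by automorphisms on a group H such that H is generated by the set {h⁻¹·(γ•h) : h ∈ H, γ ∈ Γ}. Then the canonical copy of H inside the semidirect product H ⋊ Γ is contained in the commutator subgroup of H ⋊ Γ, and the canonical projection H ⋊ Γ → Γ induces an isomorphism of abelianizations (H ⋊ Γ)^{ab} ≅ Γ^{ab}. -/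
/-- Let `Γ` be a group acting by automorphisms on a group `H` such
that `H` is generated by the elements `h⁻¹·(γ•h)` (i.e. `H` is admissible).  Then the
canonical copy of `H` inside `H ⋊ Γ` is contained in the commutator subgroup of
`H ⋊ Γ`, and the canonical projection `H ⋊ Γ → Γ` induces an isomorphism of
abelianizations `(H ⋊ Γ)^ab ≅ Γ^ab`. -/
theorem stmt18 {Γ H : Type*} [Group Γ] [Group H]
    (b : Γ →* MulAut H)
    (hadm : Subgroup.closure {x : H | ∃ (h : H) (γ : Γ), x = h⁻¹ * b γ h} = ⊤) :
    (SemidirectProduct.inl : H →* H ⋊[b] Γ).range ≤ commutator (H ⋊[b] Γ) ∧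
      Function.Bijective
        (Abelianization.map (SemidirectProduct.rightHom : H ⋊[b] Γ →* Γ)) := by
  have h1 : (SemidirectProduct.inl : H →* H ⋊[b] Γ).range ≤ commutator (H ⋊[b] Γ) := by
    rintro _ ⟨h, rfl⟩
    have hmem : h ∈ Subgroup.closure {x : H | ∃ (h : H) (γ : Γ), x = h⁻¹ * b γ h} := by
      rw [hadm]; trivial
    induction hmem using Subgroup.closure_induction with
    | mem x hx =>
      obtain ⟨h', γ, rfl⟩ := hx
      open scoped commutatorElement in
      have : (SemidirectProduct.inl (h'⁻¹ * b γ h') : H ⋊[b] Γ) =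
          ⁅(SemidirectProduct.inl h' : H ⋊[b] Γ)⁻¹, SemidirectProduct.inr γ⁆ := by
        rw [commutatorElement_def, map_mul, SemidirectProduct.inl_aut]
        simp only [map_inv]
        group
      rw [this, commutator_def]
      exact Subgroup.commutator_mem_commutator trivial trivial
    | one => simpa using (commutator (H ⋊[b] Γ)).one_mem
    | mul x y _ _ hx hy => rw [map_mul]; exact mul_mem hx hy
    | inv x _ hx => rw [map_inv]; exact inv_mem hx
  have key : ∀ x : H ⋊[b] Γ, SemidirectProduct.rightHom x ∈ commutator Γ →
      x ∈ commutator (H ⋊[b] Γ) := by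
    intro x hx
    rw [← SemidirectProduct.inl_left_mul_inr_right x]
    refine mul_mem (h1 ⟨x.left, rfl⟩) ?_
    rw [commutator_def] at hx ⊢
    have hmem : SemidirectProduct.inr x.right ∈
        Subgroup.map (SemidirectProduct.inr : Γ →* H ⋊[b] Γ) ⁅(⊤ : Subgroup Γ), ⊤⁆ :=
      Subgroup.mem_map_of_mem _ hx
    rw [Subgroup.map_commutator] at hmem
    exact Subgroup.commutator_mono le_top le_top hmem
  refine ⟨h1, ?_, ?_⟩
  · rw [injective_iff_map_eq_one]
    intro a ha
    obtain ⟨x, rfl⟩ := QuotientGroup.mk_surjective a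
    have hx : SemidirectProduct.rightHom x ∈ commutator Γ := by
      have : Abelianization.of (SemidirectProduct.rightHom x) = 1 := ha
      exact (QuotientGroup.eq_one_iff _).mp this
    exact (QuotientGroup.eq_one_iff _).mpr (key x hx)
  · intro y
    obtain ⟨g, rfl⟩ := QuotientGroup.mk_surjective y
    exact ⟨Abelianization.of (SemidirectProduct.inr g), by
      rw [Abelianization.map_of]; rfl⟩
end
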